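/- arXiv:1910.14387 — 9 statements merged into one kernel-verified Lean document; each statement's English description precedes it below -/
import Mathlib

section
/- The word w = cabdaaab over the four-letter alphabet {a,b,c,d} is cyclically solvable by a choice-free net but is not cyclically solvable by a weighted marked graph. -/
/-- A labelled transition system with initial state. -/
structure LTS (S L : Type) where
  tr : S → L → S → Prop
  init : S

namespace LTS

/-- Reachability between states of an LTS (directed paths of arcs). -/
def reach {S L : Type} (A : LTS S L) : S → S → Prop :=
  Relation.ReflTransGen (fun s s' => ∃ t, A.tr s t s')

/-- An LTS is reversible if every state is reachable from the initial state
and the initial state is reachable from every state. -/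
def reversible {S L : Type} (A : LTS S L) : Prop :=
  ∀ s : S, A.reach A.init s ∧ A.reach s A.init

end LTS

/-- Isomorphism of labelled transition systems. -/
def ltsIso {S1 S2 L : Type} (A : LTS S1 L) (B : LTS S2 L) : Prop :=
  ∃ ζ : S1 ≃ S2, ζ A.init = B.init ∧ ∀ s t s', A.tr s t s' ↔ B.tr (ζ s) t (ζ s')

/-- A weighted Petri net with places `P` and transitions `T`:
`pre p t` is the weight of the arc from `p` to `t`, `post t p` of the arc from `t` to `p`. -/
structure PetriNet (P T : Type) where
  pre : P → T → ℕ
  post : T → P → ℕ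

namespace PetriNet

variable {P T : Type}

/-- A transition `t` is enabled at marking `M`. -/
def enabled (N : PetriNet P T) (M : P → ℕ) (t : T) : Prop :=
  ∀ p, N.pre p t ≤ M p

/-- A place `p` is enabled by a marking `M`. -/
def placeEnabled (N : PetriNet P T) (M : P → ℕ) (p : P) : Prop :=
  ∀ t, N.pre p t ≤ M p

/-- The marking obtained by firing `t` at `M`. -/
def fire (N : PetriNet P T) (M : P → ℕ) (t : T) : P → ℕ :=
  fun p => M p - N.pre p t + N.post t p

/-- `M [t⟩ M'`. -/
def step (N : PetriNet P T) (M : P → ℕ) (t : T) (M' : P → ℕ) : Prop :=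
  N.enabled M t ∧ M' = N.fire M t

/-- A marking `M'` is reachable from `M` by a finite sequence of firings. -/
def Reach (N : PetriNet P T) (M M' : P → ℕ) : Prop :=
  Relation.ReflTransGen (fun M1 M2 => ∃ t, N.step M1 t M2) M M'

/-- A sequence of transitions is firable from a marking. -/
def firable (N : PetriNet P T) : (P → ℕ) → List T → Prop
  | _, [] => True
  | M, t :: σ => N.enabled M t ∧ N.firable (N.fire M t) σ

/-- The marking reached after firing a sequence of transitions. -/
def fireSeq (N : PetriNet P T) : (P → ℕ) → List T → (P → ℕ)
  | M, [] => M
  | M, t :: σ => N.fireSeq (N.fire M t) σ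

/-- A net is choice-free if every place has at most one output transition. -/
def choiceFree (N : PetriNet P T) : Prop :=
  ∀ p t t', 0 < N.pre p t → 0 < N.pre p t' → t = t'

/-- A weighted marked graph: each place has at most one output and at most one input transition. -/
def wmg (N : PetriNet P T) : Prop :=
  N.choiceFree ∧ ∀ p t t', 0 < N.post t p → 0 < N.post t' p → t = t'

/-- A net is pure if no place is a side condition of some transition. -/
def isPure (N : PetriNet P T) : Prop :=
  ∀ p t, ¬(0 < N.pre p t ∧ 0 < N.post t p)

/-- Liveness: from every reachable marking, every transition can eventually fire again. -/
def live (N : PetriNet P T) (M0 : P → ℕ) : Prop :=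
  ∀ (t : T) (M : P → ℕ), N.Reach M0 M → ∃ M', N.Reach M M' ∧ N.enabled M' t

/-- The reachability graph of a system, as an LTS on the reachable markings. -/
def RG (N : PetriNet P T) (M0 : P → ℕ) : LTS {M : P → ℕ // N.Reach M0 M} T where
  tr := fun M t M' => N.step M.1 t M'.1
  init := ⟨M0, Relation.ReflTransGen.refl⟩

end PetriNet

/-- A system solves an LTS if its reachability graph is isomorphic to it. -/
def Solves {Pl T S : Type} (N : PetriNet Pl T) (M0 : Pl → ℕ) (A : LTS S T) : Prop :=
  ltsIso (N.RG M0) A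

/-- CF-solvability of an LTS. -/
def CFSolvable {S L : Type} (A : LTS S L) : Prop :=
  ∃ (k : ℕ) (N : PetriNet (Fin k) L) (M0 : Fin k → ℕ), N.choiceFree ∧ Solves N M0 A

/-- WMG-solvability of an LTS. -/
def WMGSolvable {S L : Type} (A : LTS S L) : Prop :=
  ∃ (k : ℕ) (N : PetriNet (Fin k) L) (M0 : Fin k → ℕ), N.wmg ∧ Solves N M0 A

/-- Solvability of an LTS by a pure choice-free system. -/
def PureCFSolvable {S L : Type} (A : LTS S L) : Prop :=
  ∃ (k : ℕ) (N : PetriNet (Fin k) L) (M0 : Fin k → ℕ),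
    N.choiceFree ∧ N.isPure ∧ Solves N M0 A

/-- The circular LTS induced by a (nonempty) word `w`. -/
def circLTS {L : Type} (w : List L) (hw : 0 < w.length) : LTS (Fin w.length) L where
  tr := fun s t s' => t = w.get s ∧ s'.val = (s.val + 1) % w.length
  init := ⟨0, hw⟩

/-- The Parikh vector of a word. -/
def parikh {L : Type} [DecidableEq L] (w : List L) (t : L) : ℕ := w.count t

/-- A vector of naturals is prime if the gcd of its components equals 1. -/
def primeVec {L : Type} [Fintype L] (Υ : L → ℕ) : Prop := Finset.univ.gcd Υ = 1

/-- A word is cyclically solvable by a WMG. -/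
def cyclicWMGSolvable {L : Type} (w : List L) : Prop :=
  ∃ (hw : 0 < w.length) (k : ℕ) (N : PetriNet (Fin k) L) (M0 : Fin k → ℕ),
    N.wmg ∧ Solves N M0 (circLTS w hw)

/-- A word is cyclically solvable by a CF net. -/
def cyclicCFSolvable {L : Type} (w : List L) : Prop :=
  ∃ (hw : 0 < w.length) (k : ℕ) (N : PetriNet (Fin k) L) (M0 : Fin k → ℕ),
    N.choiceFree ∧ Solves N M0 (circLTS w hw)

/-- A circuit net: places `p_0 … p_{k-1}` and transitions `τ 0 … τ (k-1)` arranged in a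
single alternating cycle, `τ i` being the unique output of `p_i` and the unique input
of `p_{i+1 mod k}`. -/
def isCircuit {k : ℕ} {L : Type} (hk : 0 < k) (N : PetriNet (Fin k) L) : Prop :=
  ∃ τ : Fin k ≃ L,
    (∀ (i : Fin k) (t : L), 0 < N.pre i t ↔ t = τ i) ∧
    (∀ (i : Fin k) (t : L), 0 < N.post t i ↔ t = τ ⟨(i.val + k - 1) % k, Nat.mod_lt _ hk⟩)

/-- A word is cyclically solvable by a circuit system. -/
def cyclicCircuitSolvable {L : Type} (v : List L) : Prop :=
  ∃ (hv : 0 < v.length) (k : ℕ) (hk : 0 < k) (N : PetriNet (Fin k) L) (M0 : Fin k → ℕ),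
    isCircuit hk N ∧ Solves N M0 (circLTS v hv)

/-- The ordered pair `a b` is circularly adjacent in `w`. -/
def cAdj {L : Type} (w : List L) (a b : L) : Prop :=
  a ≠ b ∧ ((∃ w1 w2, w = w1 ++ a :: b :: w2) ∨ ∃ w3, w = b :: w3 ++ [a])

/-- The projection of a word on a two-element sub-alphabet, as a word over that sub-alphabet. -/
def projPair {L : Type} [DecidableEq L] (w : List L) (a b : L) :
    List {x : L // x = a ∨ x = b} :=
  w.filterMap (fun x => if h : x = a ∨ x = b then some ⟨x, h⟩ else none)

/-- The Parikh vector `P_jq` of the segment of `w` read circularly from state `s_j`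
to state `s_q` (empty when `j = q`). -/
def segParikh {L : Type} [DecidableEq L] (w : List L) (hw : 0 < w.length)
    (j q : Fin w.length) (t : L) : ℕ :=
  ((List.range ((q.val + w.length - j.val) % w.length)).map
    (fun i => w.get ⟨(j.val + i) % w.length, Nat.mod_lt _ hw⟩)).count t

/-- A region of an LTS. -/
def isRegion {S L : Type} (A : LTS S L) (R : S → ℕ) (B F : L → ℕ) : Prop :=
  ∀ s t s', A.tr s t s' → B t ≤ R s ∧ R s' = R s - B t + F t

/-- `gcd_p`: the gcd of all (nonzero) input and output weights of a place. -/
def gcdPlace {Pl T : Type} [Fintype T] (N : PetriNet Pl T) (p : Pl) : ℕ :=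
  Finset.univ.gcd (fun t => Nat.gcd (N.pre p t) (N.post t p))

/-- Conservativeness of a net. -/
def conservative {Pl T : Type} [Fintype Pl] (N : PetriNet Pl T) : Prop :=
  ∃ X : Pl → ℕ, (∀ p, 1 ≤ X p) ∧
    ∀ t, ∑ p, (X p : ℤ) * ((N.post t p : ℤ) - (N.pre p t : ℤ)) = 0

/-- The P-subnet induced by a family of places. -/
def restrictNet {Pl T : Type} {k : ℕ} (N : PetriNet Pl T) (π : Fin k → Pl) :
    PetriNet (Fin k) T where
  pre := fun i t => N.pre (π i) t
  post := fun t i => N.post t (π i)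

namespace Stmt11Aux

/-- An 8-entry lookup table. -/
def row (x0 x1 x2 x3 x4 x5 x6 x7 : ℕ) (n : ℕ) : ℕ :=
  if n = 0 then x0 else if n = 1 then x1 else if n = 2 then x2 else if n = 3 then x3
  else if n = 4 then x4 else if n = 5 then x5 else if n = 6 then x6 else x7

/-- The eight reachable markings. -/
def mk8 : Fin 8 → Fin 4 → ℕ := fun i p =>
  if p.val = 0 then row 0 2 3 0 0 1 2 3 i.val
  else if p.val = 1 then row 1 2 0 0 7 5 3 1 i.val
  else if p.val = 2 then row 2 0 0 1 1 1 1 1 i.val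
  else row 4 4 5 6 0 1 2 3 i.val

lemma v4_0 : (((0:Fin 4)) : ℕ) = 0 := rfl
lemma v4_1 : (((1:Fin 4)) : ℕ) = 1 := rfl
lemma v4_2 : (((2:Fin 4)) : ℕ) = 2 := rfl
lemma v4_3 : (((3:Fin 4)) : ℕ) = 3 := rfl
lemma v8_0 : (((0:Fin 8)) : ℕ) = 0 := rfl
lemma v8_1 : (((1:Fin 8)) : ℕ) = 1 := rfl
lemma v8_2 : (((2:Fin 8)) : ℕ) = 2 := rfl
lemma v8_3 : (((3:Fin 8)) : ℕ) = 3 := rfl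
lemma v8_4 : (((4:Fin 8)) : ℕ) = 4 := rfl
lemma v8_5 : (((5:Fin 8)) : ℕ) = 5 := rfl
lemma v8_6 : (((6:Fin 8)) : ℕ) = 6 := rfl
lemma v8_7 : (((7:Fin 8)) : ℕ) = 7 := rfl

lemma mk8_inj : Function.Injective mk8 := by decide

variable {L : Type} [DecidableEq L]

/-- The word `cabdaaab` as a selector function. -/
def wsel (a b c d : L) (n : ℕ) : L :=
  if n = 0 then c else if n = 2 then b else if n = 3 then d else if n = 7 then b else a

/-- The CF net solving `cabdaaab`. -/
def net (a b c d : L) : PetriNet (Fin 4) L where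
  pre := fun p t =>
    if p.val = 0 then (if t = b then 3 else 0)
    else if p.val = 1 then (if t = a then 2 else 0)
    else if p.val = 2 then (if t = c then 2 else 0)
    else (if t = d then 6 else 0)
  post := fun t p =>
    if p.val = 0 then (if t = a then 1 else if t = c then 2 else 0)
    else if p.val = 1 then (if t = c then 1 else if t = d then 7 else 0)
    else if p.val = 2 then (if t = b then 1 else 0)
    else (if t = a then 1 else if t = b then 1 else 0)

section
variable (a b c d : L)
variable (hab : a ≠ b) (hac : a ≠ c) (had : a ≠ d) (hbc : b ≠ c) (hbd : b ≠ d)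
  (hcd : c ≠ d)

include hab hac had hbc hbd hcd

lemma net_cf : (net a b c d).choiceFree := by
  intro p t t' h h'
  fin_cases p <;> simp only [net] at h h' <;> norm_num at h h' <;>
    split_ifs at h h' <;> simp_all

lemma net_step (i : Fin 8) :
    (net a b c d).step (mk8 i) (wsel a b c d i.val) (mk8 (i+1)) := by
  fin_cases i <;>
    refine ⟨fun p => ?_, funext fun p => ?_⟩ <;>
    fin_cases p <;>
    (simp [net, mk8, row, v4_0, v4_1, v4_2, v4_3, v8_0, v8_1, v8_2, v8_3, v8_4, v8_5, v8_6, v8_7, wsel, PetriNet.fire, v4_0, v4_1, v4_2, v4_3, v8_0, v8_1, v8_2, v8_3, v8_4, v8_5, v8_6, v8_7, hab, hac, had, hbc, hbd, hcd,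
      hab.symm, hac.symm, had.symm, hbc.symm, hbd.symm, hcd.symm]; try omega)

lemma net_back (hL : ∀ t : L, t = a ∨ t = b ∨ t = c ∨ t = d)
    (i : Fin 8) (t : L) (M' : Fin 4 → ℕ)
    (h : (net a b c d).step (mk8 i) t M') :
    t = wsel a b c d i.val ∧ M' = mk8 (i+1) := by
  obtain ⟨hen, rfl⟩ := h
  rcases hL t with rfl | rfl | rfl | rfl <;> fin_cases i <;>
  first
  | (refine absurd (hen 0) ?_; simp [net, mk8, row, v4_0, v4_1, v4_2, v4_3, hab, hac, had, hbc, hbd, hcd,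
      hab.symm, hac.symm, had.symm, hbc.symm, hbd.symm, hcd.symm]; done)
  | (refine absurd (hen 1) ?_; simp [net, mk8, row, v4_0, v4_1, v4_2, v4_3, hab, hac, had, hbc, hbd, hcd,
      hab.symm, hac.symm, had.symm, hbc.symm, hbd.symm, hcd.symm]; done)
  | (refine absurd (hen 2) ?_; simp [net, mk8, row, v4_0, v4_1, v4_2, v4_3, hab, hac, had, hbc, hbd, hcd,
      hab.symm, hac.symm, had.symm, hbc.symm, hbd.symm, hcd.symm]; done)
  | (refine absurd (hen 3) ?_; simp [net, mk8, row, v4_0, v4_1, v4_2, v4_3, hab, hac, had, hbc, hbd, hcd,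
      hab.symm, hac.symm, had.symm, hbc.symm, hbd.symm, hcd.symm]; done)
  | (refine ⟨by simp [wsel, hab, hac, had, hbc, hbd, hcd,
        hab.symm, hac.symm, had.symm, hbc.symm, hbd.symm, hcd.symm],
      funext fun p => ?_⟩ <;> fin_cases p <;>
      (simp [net, mk8, row, v4_0, v4_1, v4_2, v4_3, v8_0, v8_1, v8_2, v8_3, v8_4, v8_5, v8_6, v8_7, PetriNet.fire, v4_0, v4_1, v4_2, v4_3, v8_0, v8_1, v8_2, v8_3, v8_4, v8_5, v8_6, v8_7, hab, hac, had, hbc, hbd, hcd,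
        hab.symm, hac.symm, had.symm, hbc.symm, hbd.symm, hcd.symm]; try omega) <;> done)

end
end Stmt11Aux

open Stmt11Aux

/-- `cabdaaab` is cyclically CF-solvable but not cyclically WMG-solvable. -/
theorem stmt11 {L : Type} [Fintype L] [DecidableEq L] (a b c d : L)
    (hdist : [a, b, c, d].Pairwise (· ≠ ·)) (hcard : Fintype.card L = 4) :
    cyclicCFSolvable [c, a, b, d, a, a, a, b] ∧ ¬ cyclicWMGSolvable [c, a, b, d, a, a, a, b] := by
  obtain ⟨ha', hrest⟩ := List.pairwise_cons.mp hdist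
  obtain ⟨hb', hrest2⟩ := List.pairwise_cons.mp hrest
  obtain ⟨hc', -⟩ := List.pairwise_cons.mp hrest2
  have hab : a ≠ b := ha' b (by simp)
  have hac : a ≠ c := ha' c (by simp)
  have had : a ≠ d := ha' d (by simp)
  have hbc : b ≠ c := hb' c (by simp)
  have hbd : b ≠ d := hb' d (by simp)
  have hcd : c ≠ d := hc' d (by simp)
  have huniv : ({a, b, c, d} : Finset L) = Finset.univ := by
    apply Finset.eq_univ_of_card
    rw [hcard]
    rw [Finset.card_insert_of_notMem (by simp [hab, hac, had]),
        Finset.card_insert_of_notMem (by simp [hbc, hbd]),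
        Finset.card_insert_of_notMem (by simp [hcd]),
        Finset.card_singleton]
  have hL : ∀ t : L, t = a ∨ t = b ∨ t = c ∨ t = d := by
    intro t
    have := huniv ▸ Finset.mem_univ t
    simpa using this
  have hget : ∀ s : Fin 8, ([c,a,b,d,a,a,a,b] : List L).get s = wsel a b c d s.val := by
    intro s; fin_cases s <;> rfl
  have hw8 : 0 < ([c,a,b,d,a,a,a,b] : List L).length := by simp
  constructor
  · -- CF solvability
    refine ⟨hw8, 4, net a b c d, mk8 0, net_cf a b c d hab hac had hbc hbd hcd, ?_⟩
    have hstep := net_step a b c d hab hac had hbc hbd hcd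
    have hback := net_back a b c d hab hac had hbc hbd hcd hL
    have r0 : (net a b c d).Reach (mk8 0) (mk8 0) := Relation.ReflTransGen.refl
    have r1 : (net a b c d).Reach (mk8 0) (mk8 1) := r0.tail ⟨_, hstep 0⟩
    have r2 : (net a b c d).Reach (mk8 0) (mk8 2) := r1.tail ⟨_, hstep 1⟩
    have r3 : (net a b c d).Reach (mk8 0) (mk8 3) := r2.tail ⟨_, hstep 2⟩
    have r4 : (net a b c d).Reach (mk8 0) (mk8 4) := r3.tail ⟨_, hstep 3⟩
    have r5 : (net a b c d).Reach (mk8 0) (mk8 5) := r4.tail ⟨_, hstep 4⟩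
    have r6 : (net a b c d).Reach (mk8 0) (mk8 6) := r5.tail ⟨_, hstep 5⟩
    have r7 : (net a b c d).Reach (mk8 0) (mk8 7) := r6.tail ⟨_, hstep 6⟩
    have hreach : ∀ i : Fin 8, (net a b c d).Reach (mk8 0) (mk8 i) := by
      intro i
      fin_cases i
      exacts [r0, r1, r2, r3, r4, r5, r6, r7]
    have hsur : ∀ M, (net a b c d).Reach (mk8 0) M → ∃ i : Fin 8, M = mk8 i := by
      intro M h
      induction h with
      | refl => exact ⟨0, rfl⟩
      | tail h1 h2 ih =>
        obtain ⟨i, rfl⟩ := ih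
        obtain ⟨t, ht⟩ := h2
        exact ⟨i + 1, (hback i t _ ht).2⟩
    haveI : NeZero (List.length ([c,a,b,d,a,a,a,b] : List L)) := ⟨by simp⟩
    have hbij : Function.Bijective (fun i : Fin (List.length ([c,a,b,d,a,a,a,b] : List L)) =>
        (⟨mk8 i, hreach i⟩ : {M // (net a b c d).Reach (mk8 0) M})) := by
      constructor
      · intro i j h
        exact mk8_inj (congrArg Subtype.val h)
      · rintro ⟨M, hM⟩
        obtain ⟨i, rfl⟩ := hsur M hM
        exact ⟨i, rfl⟩
    set e := Equiv.ofBijective _ hbij with he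
    refine ⟨e.symm, ?_, ?_⟩
    · have h0 : ((net a b c d).RG (mk8 0)).init = e 0 := rfl
      rw [h0]
      exact Equiv.symm_apply_apply e 0
    · intro s t s'
      rcases e.surjective s with ⟨i, rfl⟩
      rcases e.surjective s' with ⟨j, rfl⟩
      rw [Equiv.symm_apply_apply, Equiv.symm_apply_apply]
      constructor
      · intro h
        have h' : (net a b c d).step (mk8 i) t (mk8 j) := h
        obtain ⟨h1, h2⟩ := hback i t _ h'
        have hj : j = i + 1 := mk8_inj h2
        subst hj
        constructor
        · rw [hget]; exact h1
        · rw [Fin.val_add, Fin.val_one]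
      · rintro ⟨h1, h2⟩
        have hj : j = i + 1 := by
          apply Fin.ext
          rw [Fin.val_add, Fin.val_one]
          simpa using h2
        subst hj
        have h1' : t = wsel a b c d i.val := by rw [← hget]; exact h1
        subst h1'
        exact hstep i
  · -- not WMG solvable
    intro h
    obtain ⟨hw, k, N, M0, hwmg, hsol⟩ := h
    obtain ⟨hCF, hUniq⟩ := hwmg
    obtain ⟨ζ, hζ0, hζ⟩ := hsol
    have harc8 : ∀ (si sj : Fin 8) (t : L),
        t = wsel a b c d si.val → sj.val = (si.val + 1) % 8 →
        N.step ((ζ.symm si).1) t ((ζ.symm sj).1) := by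
      intro si sj t h1 h2
      have h3 : (circLTS [c,a,b,d,a,a,a,b] hw).tr si t sj :=
        ⟨by rw [hget]; exact h1, by simpa using h2⟩
      have h5 : (circLTS [c,a,b,d,a,a,a,b] hw).tr (ζ (ζ.symm si)) t (ζ (ζ.symm sj)) := by
        rw [Equiv.apply_symm_apply, Equiv.apply_symm_apply]; exact h3
      exact (hζ (ζ.symm si) t (ζ.symm sj)).mpr h5
    have T0 := harc8 0 1 c rfl (by decide)
    have T1 := harc8 1 2 a rfl (by decide)
    have T2 := harc8 2 3 b rfl (by decide)
    have T3 := harc8 3 4 d rfl (by decide)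
    have T4 := harc8 4 5 a rfl (by decide)
    have T5 := harc8 5 6 a rfl (by decide)
    have T6 := harc8 6 7 a rfl (by decide)
    have T7 := harc8 7 0 b rfl (by decide)
    have hnen : ¬ N.enabled ((ζ.symm (6 : Fin 8)).1) b := by
      intro hen
      have hr : N.Reach M0 (N.fire ((ζ.symm (6 : Fin 8)).1) b) :=
        Relation.ReflTransGen.tail (ζ.symm (6 : Fin 8)).2 ⟨b, hen, rfl⟩
      have htr : ((N.RG M0)).tr (ζ.symm (6 : Fin 8)) b ⟨_, hr⟩ := ⟨hen, rfl⟩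
      have h6 := (hζ _ b _).mp htr
      rw [Equiv.apply_symm_apply] at h6
      have hba' : b = wsel a b c d ((6 : Fin 8) : ℕ) := by rw [← hget]; exact h6.1
      have hba2 : b = a := by simpa [wsel] using hba'
      exact hab hba2.symm
    obtain ⟨p, hp⟩ : ∃ p, ((ζ.symm (6 : Fin 8)).1) p < N.pre p b := by
      by_contra hcon
      push_neg at hcon
      exact hnen fun q => hcon q
    have hβ : 0 < N.pre p b := Nat.lt_of_le_of_lt (Nat.zero_le _) hp
    have hpa : N.pre p a = 0 := by
      by_contra hh
      exact hab (hCF p a b (Nat.pos_of_ne_zero hh) hβ)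
    have hpc : N.pre p c = 0 := by
      by_contra hh
      exact hbc.symm (hCF p c b (Nat.pos_of_ne_zero hh) hβ)
    have hpd : N.pre p d = 0 := by
      by_contra hh
      exact hbd.symm (hCF p d b (Nat.pos_of_ne_zero hh) hβ)
    obtain ⟨hen0, hf0⟩ := T0
    obtain ⟨hen1, hf1⟩ := T1
    obtain ⟨hen2, hf2⟩ := T2
    obtain ⟨hen3, hf3⟩ := T3
    obtain ⟨hen4, hf4⟩ := T4
    obtain ⟨hen5, hf5⟩ := T5
    obtain ⟨hen6, hf6⟩ := T6
    obtain ⟨hen7, hf7⟩ := T7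
    have g0 := congrFun hf0 p
    have g1 := congrFun hf1 p
    have g2 := congrFun hf2 p
    have g3 := congrFun hf3 p
    have g4 := congrFun hf4 p
    have g5 := congrFun hf5 p
    have g6 := congrFun hf6 p
    have g7 := congrFun hf7 p
    simp only [PetriNet.fire] at g0 g1 g2 g3 g4 g5 g6 g7
    have hb2 := hen2 p
    have hb7 := hen7 p
    rcases Nat.eq_zero_or_pos (N.post a p) with ea | ea <;>
    rcases Nat.eq_zero_or_pos (N.post b p) with eb | eb <;>
    rcases Nat.eq_zero_or_pos (N.post c p) with ec | ec <;>
    rcases Nat.eq_zero_or_pos (N.post d p) with ed | ed <;>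
    first
    | omega
    | exact absurd (hUniq p a b ea eb) hab
    | exact absurd (hUniq p a c ea ec) hac
    | exact absurd (hUniq p a d ea ed) had
    | exact absurd (hUniq p b c eb ec) hbc
    | exact absurd (hUniq p b d eb ed) hbd
    | exact absurd (hUniq p c d ec ed) hcd
end

section
/- Let w = bcafdeaaabcdaafdcaaa over the alphabet T={a,b,c,d,e,f}, and let TS be the circular LTS induced by w, with states s0,…,s19. There is no region (R,B,F) of TS satisfying B(t)=0 for every t≠a, F(a)=0, B(a)≥1, and R(s)<B(a) for every state s whose (unique) outgoing arc is not labelled a. In other words, in any Petri net solving TS, no single pure place that is an input only of transition a can disable a at all states where a must not fire. -/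
/-- for `w = bcafdeaaabcdaafdcaaa`, no single pure input place of `a`
can solve all the event/state separation problems against `a`. -/
theorem stmt12 {L : Type} [Fintype L] [DecidableEq L] (a b c d e f : L)
    (hdist : [a, b, c, d, e, f].Pairwise (· ≠ ·)) (hcard : Fintype.card L = 6)
    (w : List L)
    (hwdef : w = [b, c, a, f, d, e, a, a, a, b, c, d, a, a, f, d, c, a, a, a])
    (hw : 0 < w.length) :
    ¬ ∃ (R : Fin w.length → ℕ) (B F : L → ℕ),
        isRegion (circLTS w hw) R B F ∧
        (∀ t, t ≠ a → B t = 0) ∧ F a = 0 ∧ 1 ≤ B a ∧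
        (∀ s : Fin w.length, w.get s ≠ a → R s < B a) := by
  rintro ⟨R, B, F, hreg, hB0, hFa, hBa, hsep⟩
  subst hwdef
  simp only [List.pairwise_cons, List.mem_cons, List.mem_singleton] at hdist
  have hca : c ≠ a := fun h => hdist.1 c (by simp) h.symm
  have hfa : f ≠ a := fun h => hdist.1 f (by simp) h.symm
  have hBc : B c = 0 := hB0 c hca
  have h1 := hreg ⟨1, by norm_num⟩ c ⟨2, by norm_num⟩ ⟨rfl, rfl⟩
  have h2 := hreg ⟨2, by norm_num⟩ a ⟨3, by norm_num⟩ ⟨rfl, rfl⟩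
  have h16 := hreg ⟨16, by norm_num⟩ c ⟨17, by norm_num⟩ ⟨rfl, rfl⟩
  have h17 := hreg ⟨17, by norm_num⟩ a ⟨18, by norm_num⟩ ⟨rfl, rfl⟩
  have h18 := hreg ⟨18, by norm_num⟩ a ⟨19, by norm_num⟩ ⟨rfl, rfl⟩
  have h19 := hreg ⟨19, by norm_num⟩ a ⟨0, by norm_num⟩ ⟨rfl, by norm_num⟩
  have hs3 := hsep ⟨3, by norm_num⟩ hfa
  have hs16 := hsep ⟨16, by norm_num⟩ hca
  obtain ⟨h1a, h1b⟩ := h1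
  obtain ⟨h2a, h2b⟩ := h2
  obtain ⟨h16a, h16b⟩ := h16
  obtain ⟨h17a, h17b⟩ := h17
  obtain ⟨h18a, h18b⟩ := h18
  obtain ⟨h19a, h19b⟩ := h19
  omega
end

section
/- Let S=((P,T,W),M0) be a Petri net system and let α assign to each place p a positive rational α_p such that α_p·W(t,p)∈ℕ and α_p·W(p,t)∈ℕ for every transition t, and α_p·M0(p)∈ℕ. Let S' be the system obtained from S by replacing, for each place p, the weights W(t,p), W(p,t) and the initial marking M0(p) by α_p·W(t,p), α_p·W(p,t) and α_p·M0(p). Then a sequence σ∈T* is firable from the initial marking of S if and only if it is firable from the initial marking of S'; moreover, if M and M' are the markings reached by firing σ in S and in S' respectively, then the set of places enabled by M equals the set of places enabled by M'. -/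
/-! Scaling weights and markings place-wise by positive rationals preserves every comparison
`W(p,t) ≤ M(p)`, and firing commutes with scaling because the marking update is linear. -/

theorem Nat.cast_le_iff_of_eq_mul {c : ℚ} (hc : 0 < c) {a b a' b' : ℕ}
    (ha : (a' : ℚ) = c * a) (hb : (b' : ℚ) = c * b) : a' ≤ b' ↔ a ≤ b := by
  rw [← Nat.cast_le (α := ℚ), ← Nat.cast_le (α := ℚ), ha, hb]
  exact mul_le_mul_iff_right₀ hc

namespace PetriNet

variable {Pl T : Type} {N N' : PetriNet Pl T} {α : Pl → ℚ} {M M' : Pl → ℕ}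

theorem enabled_iff_of_scaled (hα : ∀ p, 0 < α p)
    (hpre : ∀ p t, (N'.pre p t : ℚ) = α p * N.pre p t)
    (hM : ∀ p, (M' p : ℚ) = α p * M p) (t : T) :
    N'.enabled M' t ↔ N.enabled M t :=
  forall_congr' fun p => Nat.cast_le_iff_of_eq_mul (hα p) (hpre p t) (hM p)

theorem placeEnabled_iff_of_scaled (hα : ∀ p, 0 < α p)
    (hpre : ∀ p t, (N'.pre p t : ℚ) = α p * N.pre p t)
    (hM : ∀ p, (M' p : ℚ) = α p * M p) (p : Pl) :
    N'.placeEnabled M' p ↔ N.placeEnabled M p :=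
  forall_congr' fun t => Nat.cast_le_iff_of_eq_mul (hα p) (hpre p t) (hM p)

theorem fire_scaled (hα : ∀ p, 0 < α p)
    (hpre : ∀ p t, (N'.pre p t : ℚ) = α p * N.pre p t)
    (hpost : ∀ p t, (N'.post t p : ℚ) = α p * N.post t p)
    (hM : ∀ p, (M' p : ℚ) = α p * M p) {t : T} (ht : N.enabled M t) (p : Pl) :
    (N'.fire M' t p : ℚ) = α p * N.fire M t p := by
  have ht' : N'.pre p t ≤ M' p := (enabled_iff_of_scaled hα hpre hM t).2 ht p
  simp only [fire]
  push_cast [Nat.cast_sub (ht p), Nat.cast_sub ht']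
  rw [hM p, hpre p t, hpost p t]
  ring

theorem firable_iff_and_fireSeq_scaled (hα : ∀ p, 0 < α p)
    (hpre : ∀ p t, (N'.pre p t : ℚ) = α p * N.pre p t)
    (hpost : ∀ p t, (N'.post t p : ℚ) = α p * N.post t p)
    (σ : List T) (hM : ∀ p, (M' p : ℚ) = α p * M p) :
    (N.firable M σ ↔ N'.firable M' σ) ∧
      (N.firable M σ → ∀ p, (N'.fireSeq M' σ p : ℚ) = α p * N.fireSeq M σ p) := by
  induction σ generalizing M M' with
  | nil => exact ⟨Iff.rfl, fun _ => hM⟩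
  | cons t σ ih =>
    by_cases ht : N.enabled M t
    · have ih := ih (fire_scaled hα hpre hpost hM ht)
      have ht' : N'.enabled M' t := (enabled_iff_of_scaled hα hpre hM t).2 ht
      simpa only [firable, fireSeq, ht, ht', true_and] using ih
    · have ht' : ¬N'.enabled M' t := (enabled_iff_of_scaled hα hpre hM t).not.2 ht
      simp [firable, ht, ht']

end PetriNet

/-- scaling a system by positive rationals preserves firable sequences
and the sets of enabled places. -/
theorem stmt13 {Pl T : Type} (N N' : PetriNet Pl T) (M0 M0' : Pl → ℕ) (α : Pl → ℚ)
    (hα : ∀ p, 0 < α p)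
    (hpre : ∀ p t, (N'.pre p t : ℚ) = α p * N.pre p t)
    (hpost : ∀ p t, (N'.post t p : ℚ) = α p * N.post t p)
    (hM0 : ∀ p, (M0' p : ℚ) = α p * M0 p)
    (σ : List T) :
    (N.firable M0 σ ↔ N'.firable M0' σ) ∧
    (N.firable M0 σ →
      ∀ p, (N.placeEnabled (N.fireSeq M0 σ) p ↔ N'.placeEnabled (N'.fireSeq M0' σ) p)) := by
  obtain ⟨hfirable, hreached⟩ := PetriNet.firable_iff_and_fireSeq_scaled hα hpre hpost σ hM0
  exact ⟨hfirable, fun hσ p => (PetriNet.placeEnabled_iff_of_scaled hα hpre (hreached hσ) p).symm⟩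
end

section
/- Let S=(N,M0) be a conservative circuit system. Suppose there is a place p0, with unique output transition t0, such that M0(p0)=W(p0,t0), and that every other place p, with unique output transition t, satisfies M0(p)=W(p,t)−gcd_p. Then S is live. Moreover, (N,M0') is live for every marking M0' with M0'(p)≥M0(p) for all places p. -/
lemma gdvd_pre {Pl T : Type} [Fintype T] (N : PetriNet Pl T) (p : Pl) (t : T) :
    gcdPlace N p ∣ N.pre p t :=
  dvd_trans (Finset.gcd_dvd (Finset.mem_univ t)) (Nat.gcd_dvd_left _ _)

lemma gdvd_post {Pl T : Type} [Fintype T] (N : PetriNet Pl T) (p : Pl) (t : T) :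
    gcdPlace N p ∣ N.post t p :=
  dvd_trans (Finset.gcd_dvd (Finset.mem_univ t)) (Nat.gcd_dvd_right _ _)

lemma reach_modEq {Pl T : Type} [Fintype T] (N : PetriNet Pl T) {M0 M : Pl → ℕ}
    (h : N.Reach M0 M) (p : Pl) : M p ≡ M0 p [MOD gcdPlace N p] := by
  induction h with
  | refl => rfl
  | @tail b c _ hstep ih =>
    obtain ⟨t, hen, rfl⟩ := hstep
    refine Nat.ModEq.trans ?_ ih
    show (b p - N.pre p t + N.post t p) ≡ b p [MOD gcdPlace N p]
    have h2 : N.post t p ≡ 0 [MOD gcdPlace N p] :=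
      (Nat.modEq_zero_iff_dvd).2 (gdvd_post N p t)
    have h1 : b p - N.pre p t ≡ b p [MOD gcdPlace N p] := by
      refine (Nat.modEq_iff_dvd' (Nat.sub_le _ _)).2 ?_
      rw [Nat.sub_sub_self (hen p)]
      exact gdvd_pre N p t
    calc b p - N.pre p t + N.post t p
        ≡ b p - N.pre p t + 0 [MOD gcdPlace N p] := Nat.ModEq.add_left _ h2
      _ = b p - N.pre p t := by ring
      _ ≡ b p [MOD gcdPlace N p] := h1

lemma reach_sum {k : ℕ} {T : Type} [Fintype T] (N : PetriNet (Fin k) T)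
    (X : Fin k → ℕ)
    (hXc : ∀ t, ∑ p, (X p : ℤ) * ((N.post t p : ℤ) - (N.pre p t : ℤ)) = 0)
    {M0 M : Fin k → ℕ} (h : N.Reach M0 M) :
    ∑ p, (X p : ℤ) * M p = ∑ p, (X p : ℤ) * M0 p := by
  induction h with
  | refl => rfl
  | @tail b c _ hstep ih =>
    obtain ⟨t, hen, rfl⟩ := hstep
    have hcast : ∀ p : Fin k, ((N.fire b t p : ℕ) : ℤ)
        = (b p : ℤ) + ((N.post t p : ℤ) - (N.pre p t : ℤ)) := by
      intro p
      have := hen p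
      simp only [PetriNet.fire]
      omega
    calc ∑ p, (X p : ℤ) * (N.fire b t p)
        = ∑ p, ((X p : ℤ) * b p + (X p : ℤ) * ((N.post t p : ℤ) - (N.pre p t : ℤ))) := by
          refine Finset.sum_congr rfl fun p _ => ?_
          rw [hcast p]; ring
      _ = (∑ p, (X p : ℤ) * b p) + ∑ p, (X p : ℤ) * ((N.post t p : ℤ) - (N.pre p t : ℤ)) :=
          Finset.sum_add_distrib
      _ = ∑ p, (X p : ℤ) * b p := by rw [hXc t, add_zero]
      _ = _ := ih

lemma mult_lt_step {g x y : ℕ} (hg : 0 < g) (hx : g ∣ x) (hy : g ∣ y) (hxy : x < y) :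
    x + g ≤ y := by
  have h1 : g ∣ y - x := Nat.dvd_sub hy hx
  have h2 : g ≤ y - x := Nat.le_of_dvd (by omega) h1
  omega

/-- sufficient condition of liveness for conservative circuit systems,
with monotonicity. -/
theorem stmt14 {k : ℕ} {T : Type} [Fintype T] (hk : 0 < k)
    (N : PetriNet (Fin k) T) (hcirc : isCircuit hk N) (hcons : conservative N)
    (M0 : Fin k → ℕ) (p0 : Fin k) (t0 : T)
    (ht0 : ∀ t, 0 < N.pre p0 t ↔ t = t0)
    (hp0 : M0 p0 = N.pre p0 t0)
    (hrest : ∀ p : Fin k, p ≠ p0 → ∀ t : T, 0 < N.pre p t →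
      M0 p = N.pre p t - gcdPlace N p) :
    N.live M0 ∧ ∀ M0' : Fin k → ℕ, (∀ p, M0 p ≤ M0' p) → N.live M0' := by
  classical
  obtain ⟨τ, hpre, hpost⟩ := hcirc
  obtain ⟨X, hX1, hXc⟩ := hcons
  have hpre0 : ∀ (p : Fin k) (t : T), t ≠ τ p → N.pre p t = 0 := fun p t h =>
    Nat.eq_zero_of_not_pos fun hp => h ((hpre p t).1 hp)
  have ha : ∀ p, 0 < N.pre p (τ p) := fun p => (hpre p (τ p)).2 rfl
  have hgpos : ∀ p, 0 < gcdPlace N p := by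
    intro p
    rcases Nat.eq_zero_or_pos (gcdPlace N p) with h | h
    · exfalso
      have h1 := (Finset.gcd_eq_zero_iff.mp h) (τ p) (Finset.mem_univ _)
      have h2 := Nat.eq_zero_of_gcd_eq_zero_left h1
      exact (ha p).ne' h2
    · exact h
  have hga : ∀ p, gcdPlace N p ∣ N.pre p (τ p) := fun p => gdvd_pre N p _
  have ht0' : τ p0 = t0 := (ht0 (τ p0)).1 (ha p0)
  have hM0p0 : M0 p0 = N.pre p0 (τ p0) := by rw [hp0, ht0']
  have hM0r : ∀ p, p ≠ p0 → M0 p = N.pre p (τ p) - gcdPlace N p :=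
    fun p h => hrest p h (τ p) (ha p)
  -- deadlock-freeness
  have hdf : ∀ M0' : Fin k → ℕ, (∀ p, M0 p ≤ M0' p) → ∀ M, N.Reach M0' M →
      ∃ t, N.enabled M t := by
    intro M0' hle M hM
    by_contra hcon
    push_neg at hcon
    simp only [PetriNet.enabled, not_forall, not_le] at hcon
    have hMa : ∀ i : Fin k, M i < N.pre i (τ i) := by
      intro i
      obtain ⟨p, hp⟩ := hcon (τ i)
      rcases eq_or_ne p i with rfl | hne
      · exact hp
      · rw [hpre0 p (τ i) (fun h => hne (τ.injective h).symm)] at hp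
        omega
    have key : ∀ p : Fin k,
        (if p = p0 then (X p : ℤ) * gcdPlace N p else 0)
          ≤ (X p : ℤ) * ((M0' p : ℤ) - (M p : ℤ)) := by
      intro p
      have hmod : M p % gcdPlace N p = M0' p % gcdPlace N p := reach_modEq N hM p
      set g := gcdPlace N p with hgdef
      set r := M0' p % g with hrdef
      have hrg : r < g := Nat.mod_lt _ (hgpos p)
      have hdM0 : g ∣ M0 p := by
        rcases eq_or_ne p p0 with rfl | hne
        · rw [hM0p0]; exact hga p
        · rw [hM0r p hne]; exact Nat.dvd_sub (hga p) dvd_rfl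
      have hdm := Nat.div_add_mod (M p) g
      have hdvd : g ∣ M p - r := ⟨M p / g, by omega⟩
      have hclaim1 : M p + g ≤ N.pre p (τ p) + r := by
        have := mult_lt_step (hgpos p) hdvd (hga p) (by have := hMa p; omega)
        omega
      have hdm' := Nat.div_add_mod (M0' p) g
      have hdvd' : g ∣ M0' p - r := ⟨M0' p / g, by omega⟩
      have hclaim2 : M0 p + r ≤ M0' p := by
        by_contra hcc
        push_neg at hcc
        have h9 := hle p
        have := mult_lt_step (hgpos p) hdvd' hdM0 (by omega)
        omega
      by_cases hne : p = p0
      · simp only [if_pos hne]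
        have hM0p : M0 p = N.pre p (τ p) := by rw [hne]; exact hM0p0
        have hbig : (g : ℤ) ≤ (M0' p : ℤ) - (M p : ℤ) := by omega
        exact mul_le_mul_of_nonneg_left hbig (by positivity)
      · simp only [if_neg hne]
        have hga' : g ≤ N.pre p (τ p) := Nat.le_of_dvd (ha p) (hga p)
        have hbig : (0 : ℤ) ≤ (M0' p : ℤ) - (M p : ℤ) := by
          have := hM0r p hne
          omega
        exact mul_nonneg (by positivity) hbig
    have hsum := reach_sum N X hXc hM
    have hzero : ∑ p, (X p : ℤ) * ((M0' p : ℤ) - (M p : ℤ)) = 0 := by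
      have hsplit : ∑ p, (X p : ℤ) * ((M0' p : ℤ) - (M p : ℤ))
          = (∑ p, (X p : ℤ) * (M0' p : ℤ)) - ∑ p, (X p : ℤ) * (M p : ℤ) := by
        rw [← Finset.sum_sub_distrib]
        exact Finset.sum_congr rfl fun p _ => by ring
      rw [hsplit, hsum, sub_self]
    have hge : (X p0 : ℤ) * gcdPlace N p0
        ≤ ∑ p, (X p : ℤ) * ((M0' p : ℤ) - (M p : ℤ)) := by
      calc (X p0 : ℤ) * gcdPlace N p0
          = ∑ p, (if p = p0 then (X p : ℤ) * gcdPlace N p else 0) := by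
            rw [Finset.sum_ite_eq' Finset.univ p0]
            simp
        _ ≤ _ := Finset.sum_le_sum fun p _ => key p
    have hpos : (0 : ℤ) < (X p0 : ℤ) * gcdPlace N p0 := by
      have h1 : (0:ℤ) < (X p0 : ℤ) := by exact_mod_cast hX1 p0
      have h2 : (0:ℤ) < (gcdPlace N p0 : ℤ) := by exact_mod_cast hgpos p0
      exact mul_pos h1 h2
    linarith
  -- boundedness
  have hbound : ∀ (M0' M : Fin k → ℕ), N.Reach M0' M → ∀ q, M q ≤ ∑ p, X p * M0' p := by
    intro M0' M hM q
    have hsum := reach_sum N X hXc hM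
    have h1 : (X q : ℤ) * M q ≤ ∑ p, (X p : ℤ) * M p :=
      Finset.single_le_sum (f := fun p => (X p : ℤ) * (M p : ℤ))
        (fun p _ => by positivity) (Finset.mem_univ q)
    have h2 : (M q : ℤ) ≤ (X q : ℤ) * M q :=
      le_mul_of_one_le_left (Nat.cast_nonneg _) (by exact_mod_cast hX1 q)
    have h3 : ((∑ p, X p * M0' p : ℕ) : ℤ) = ∑ p, (X p : ℤ) * (M0' p : ℤ) := by
      push_cast
      rfl
    have h4 : (M q : ℤ) ≤ ((∑ p, X p * M0' p : ℕ) : ℤ) := by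
      rw [h3]
      calc (M q : ℤ) ≤ (X q : ℤ) * M q := h2
        _ ≤ ∑ p, (X p : ℤ) * M p := h1
        _ = _ := hsum
    exact_mod_cast h4
  -- successor index facts
  have hval : ∀ i : Fin k, ((i.val + 1) % k + k - 1) % k = i.val := by
    intro i
    rcases Nat.lt_or_ge (i.val + 1) k with h | h
    · rw [Nat.mod_eq_of_lt h]
      have h2 : i.val + 1 + k - 1 = i.val + k := by omega
      rw [h2, Nat.add_mod_right, Nat.mod_eq_of_lt i.isLt]
    · have hik : i.val + 1 = k := by have := i.isLt; omega
      rw [hik, Nat.mod_self]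
      have h2 : 0 + k - 1 = i.val := by omega
      rw [h2, Nat.mod_eq_of_lt i.isLt]
  have hsucc_eq : ∀ i : Fin k,
      (⟨((i.val + 1) % k + k - 1) % k, Nat.mod_lt _ hk⟩ : Fin k) = i :=
    fun i => Fin.ext (hval i)
  have hpost_succ : ∀ i : Fin k,
      0 < N.post (τ i) ⟨(i.val + 1) % k, Nat.mod_lt _ hk⟩ :=
    fun i => (hpost _ _).2 (congrArg τ (hsucc_eq i)).symm
  -- liveness for every M0' ≥ M0
  have hlive : ∀ M0' : Fin k → ℕ, (∀ p, M0 p ≤ M0' p) → N.live M0' := by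
    intro M0' hle t M hM
    let pick : (Fin k → ℕ) → T := fun Mc => if h : ∃ u, N.enabled Mc u then h.choose else t0
    have hpick : ∀ Mc : Fin k → ℕ, (∃ u, N.enabled Mc u) → N.enabled Mc (pick Mc) := by
      intro Mc hex
      show N.enabled Mc (if h : ∃ u, N.enabled Mc u then h.choose else t0)
      rw [dif_pos hex]
      exact hex.choose_spec
    let f : ℕ → Fin k → ℕ := fun n => Nat.rec M (fun _ Mn => N.fire Mn (pick Mn)) n
    have hfs : ∀ n, f (n + 1) = N.fire (f n) (pick (f n)) := fun n => rfl
    have hrr : ∀ n, N.Reach M0' (f n) ∧ N.Reach M (f n) := by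
      intro n
      induction n with
      | zero => exact ⟨hM, Relation.ReflTransGen.refl⟩
      | succ n ih =>
        have hen : N.enabled (f n) (pick (f n)) := hpick _ (hdf M0' hle (f n) ih.1)
        have hstep : ∃ u, N.step (f n) u (f (n + 1)) := ⟨pick (f n), hen, hfs n⟩
        exact ⟨ih.1.tail hstep, ih.2.tail hstep⟩
    have hen : ∀ n, N.enabled (f n) (pick (f n)) :=
      fun n => hpick _ (hdf M0' hle (f n) (hrr n).1)
    -- pigeonhole: some transition fires infinitely often
    have hpig : ∃ i : Fin k, Set.Infinite {n | pick (f n) = τ i} := by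
      obtain ⟨u, hu⟩ := Finite.exists_infinite_fiber (fun n => pick (f n))
      refine ⟨τ.symm u, ?_⟩
      have heq : (fun n => pick (f n)) ⁻¹' {u} = {n | pick (f n) = τ (τ.symm u)} := by
        ext n
        simp
      rw [← heq]
      exact Set.infinite_coe_iff.mp hu
    -- closure under successor
    have hclose : ∀ i i' : Fin k, i'.val = (i.val + 1) % k →
        Set.Infinite {n | pick (f n) = τ i} →
        Set.Infinite {n | pick (f n) = τ i'} := by
      intro i i' hvv hinf
      by_contra hfin
      rw [Set.not_infinite] at hfin
      obtain ⟨N0, hN0⟩ := hfin.bddAbove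
      have hne : ∀ n, N0 + 1 ≤ n → pick (f n) ≠ τ i' := by
        intro n hn h
        have := hN0 h
        omega
      have hstep' : ∀ n, N0 + 1 ≤ n →
          f n i' ≤ f (n + 1) i' ∧ (pick (f n) = τ i → f n i' + 1 ≤ f (n + 1) i') := by
        intro n hn
        have hpz : N.pre i' (pick (f n)) = 0 := hpre0 i' _ (hne n hn)
        have hv : f (n + 1) i' = f n i' - N.pre i' (pick (f n)) + N.post (pick (f n)) i' := by
          rw [hfs n]
          rfl
        constructor
        · rw [hv, hpz]
          omega
        · intro hτ
          have hp : 0 < N.post (pick (f n)) i' := by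
            rw [hτ]
            have e : i' = ⟨(i.val + 1) % k, Nat.mod_lt _ hk⟩ := Fin.ext hvv
            rw [e]
            exact hpost_succ i
          rw [hv, hpz]
          omega
      have hmono : ∀ n m, N0 + 1 ≤ n → n ≤ m → f n i' ≤ f m i' := by
        intro n m hn hnm
        induction m, hnm using Nat.le_induction with
        | base => exact le_refl _
        | succ m hm ih => exact le_trans ih ((hstep' m (le_trans hn hm)).1)
      have hgrow : ∀ c, ∃ n, N0 + 1 ≤ n ∧ c ≤ f n i' := by
        intro c
        induction c with
        | zero => exact ⟨N0 + 1, le_refl _, Nat.zero_le _⟩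
        | succ c ih =>
          obtain ⟨n, hn, hc⟩ := ih
          obtain ⟨m, hm, hm2⟩ := (hinf.diff (Set.finite_Iic n)).nonempty
          simp only [Set.mem_diff, Set.mem_Iic, not_le] at hm2
          have h1 : f n i' ≤ f m i' := hmono n m hn (le_of_lt hm2)
          have h2 := (hstep' m (by omega)).2 hm
          exact ⟨m + 1, by omega, by omega⟩
      obtain ⟨n, hn, hc⟩ := hgrow ((∑ p, X p * M0' p) + 1)
      have := hbound M0' (f n) (hrr n).1 i'
      omega
    -- every transition fires infinitely often
    have hall : ∀ j : Fin k, Set.Infinite {n | pick (f n) = τ j} := by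
      obtain ⟨i0, hi0⟩ := hpig
      let idx : ℕ → Fin k := fun m => ⟨(i0.val + m) % k, Nat.mod_lt _ hk⟩
      have hiter : ∀ m : ℕ, Set.Infinite {n | pick (f n) = τ (idx m)} := by
        intro m
        induction m with
        | zero =>
          have h0 : idx 0 = i0 := Fin.ext (by
            show (i0.val + 0) % k = i0.val
            rw [Nat.add_zero, Nat.mod_eq_of_lt i0.isLt])
          rw [h0]
          exact hi0
        | succ m ih =>
          refine hclose (idx m) (idx (m + 1)) ?_ ih
          show (i0.val + (m + 1)) % k = ((i0.val + m) % k + 1) % k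
          rw [Nat.mod_add_mod, Nat.add_assoc]
      intro j
      have hj := hiter (k - i0.val + j.val)
      have heq : idx (k - i0.val + j.val) = j := by
        apply Fin.ext
        have h1 : i0.val + (k - i0.val + j.val) = k + j.val := by
          have := i0.isLt
          omega
        show (i0.val + (k - i0.val + j.val)) % k = j.val
        rw [h1, Nat.add_mod_left, Nat.mod_eq_of_lt j.isLt]
      rw [heq] at hj
      exact hj
    obtain ⟨n, hn⟩ := (hall (τ.symm t)).nonempty
    refine ⟨f n, (hrr n).2, ?_⟩
    have hchosen := hen n
    have hn' : pick (f n) = τ (τ.symm t) := hn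
    rw [hn', Equiv.apply_symm_apply] at hchosen
    exact hchosen
  exact ⟨hlive M0 (fun p => le_refl _), hlive⟩
end

section
/- Let S be a binary circuit system over T={a,b}, with places p_ab (unique input a, unique output b) and p_ba (unique input b, unique output a), which is 1-conservative (for each transition, the sum of the weights of its input arcs equals the sum of the weights of its output arcs; equivalently W(a,p_ab)=W(p_ba,a) and W(b,p_ba)=W(p_ab,b)), and whose initial marking M0 satisfies the useful tokens condition (M0(p) is a multiple of gcd_p for each place p). Let m=W(a,p_ab) and n=W(p_ab,b). Then S is live if and only if M0(p_ab)+M0(p_ba) > m+n−2·gcd(m,n). -/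
/-- liveness of 1-conservative binary circuits with useful tokens. -/
theorem stmt15 {L : Type} [Fintype L] [DecidableEq L] (a b : L) (hab : a ≠ b)
    (hcard : Fintype.card L = 2)
    (N : PetriNet (Fin 2) L) (M0 : Fin 2 → ℕ)
    (h1 : 0 < N.post a 0) (h2 : 0 < N.pre 0 b) (h3 : 0 < N.post b 1) (h4 : 0 < N.pre 1 a)
    (hz1 : N.pre 0 a = 0) (hz2 : N.pre 1 b = 0) (hz3 : N.post b 0 = 0) (hz4 : N.post a 1 = 0)
    (hcons1 : N.post a 0 = N.pre 1 a) (hcons2 : N.post b 1 = N.pre 0 b)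
    (hu0 : gcdPlace N 0 ∣ M0 0) (hu1 : gcdPlace N 1 ∣ M0 1) :
    N.live M0 ↔
      N.post a 0 + N.pre 0 b - 2 * Nat.gcd (N.post a 0) (N.pre 0 b) < M0 0 + M0 1 := by
  have hFin : ∀ p : Fin 2, p = 0 ∨ p = 1 := by decide
  have hL : ∀ t : L, t = a ∨ t = b := by
    intro t
    by_contra hcon
    push_neg at hcon
    have h3' : ({t, a, b} : Finset L).card = 3 := by
      rw [Finset.card_insert_of_notMem (by simp [hcon.1, hcon.2]),
          Finset.card_insert_of_notMem (by simp [hab])]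
      simp
    have h4' := Finset.card_le_univ ({t, a, b} : Finset L)
    rw [h3', hcard] at h4'
    omega
  set m := N.post a 0 with hm
  set n := N.pre 0 b with hn
  set g := Nat.gcd m n with hg
  have hgm : g ∣ m := Nat.gcd_dvd_left m n
  have hgn : g ∣ n := Nat.gcd_dvd_right m n
  have hgpos : 0 < g := Nat.gcd_pos_of_pos_left n h1
  have hg0 : g ∣ M0 0 := by
    refine dvd_trans ?_ hu0
    unfold gcdPlace
    refine Finset.dvd_gcd ?_
    intro t _
    rcases hL t with rfl | rfl
    · exact Nat.dvd_gcd (by rw [hz1]; exact dvd_zero g) (by rw [← hm]; exact hgm)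
    · exact Nat.dvd_gcd (by rw [← hn]; exact hgn) (by rw [hz3]; exact dvd_zero g)
  have hg1 : g ∣ M0 1 := by
    refine dvd_trans ?_ hu1
    unfold gcdPlace
    refine Finset.dvd_gcd ?_
    intro t _
    rcases hL t with rfl | rfl
    · exact Nat.dvd_gcd (by rw [← hcons1]; exact hgm) (by rw [hz4]; exact dvd_zero g)
    · exact Nat.dvd_gcd (by rw [hz2]; exact dvd_zero g) (by rw [hcons2]; exact hgn)
  have hena : ∀ M : Fin 2 → ℕ, m ≤ M 1 → N.enabled M a := by
    intro M h p
    rcases hFin p with rfl | rfl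
    · rw [hz1]; exact Nat.zero_le _
    · rw [← hcons1]; exact h
  have henb : ∀ M : Fin 2 → ℕ, n ≤ M 0 → N.enabled M b := by
    intro M h p
    rcases hFin p with rfl | rfl
    · rw [← hn]; exact h
    · rw [hz2]; exact Nat.zero_le _
  have hstep : ∀ (M : Fin 2 → ℕ) (t : L) (M' : Fin 2 → ℕ), N.step M t M' →
      (t = a ∧ m ≤ M 1 ∧ M' 0 = M 0 + m ∧ M' 1 + m = M 1) ∨
      (t = b ∧ n ≤ M 0 ∧ M' 0 + n = M 0 ∧ M' 1 = M 1 + n) := by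
    intro M t M' hst
    obtain ⟨hen, hfe⟩ := hst
    rcases hL t with rfl | rfl
    · left
      have hm1 : m ≤ M 1 := by have := hen 1; rw [← hcons1] at this; exact this
      refine ⟨rfl, hm1, ?_, ?_⟩
      · rw [hfe]
        simp only [PetriNet.fire]
        rw [hz1, ← hm]; omega
      · rw [hfe]
        simp only [PetriNet.fire]
        rw [hz4, ← hcons1]; omega
    · right
      have hm0 : n ≤ M 0 := by have := hen 0; rw [← hn] at this; exact this
      refine ⟨rfl, hm0, ?_, ?_⟩
      · rw [hfe]
        simp only [PetriNet.fire]
        rw [hz3, ← hn]; omega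
      · rw [hfe]
        simp only [PetriNet.fire]
        rw [hz2, hcons2]; omega
  have hinv : ∀ M, N.Reach M0 M → M 0 + M 1 = M0 0 + M0 1 ∧ g ∣ M 0 ∧ g ∣ M 1 := by
    intro M hR
    induction hR with
    | refl => exact ⟨rfl, hg0, hg1⟩
    | @tail Mb Mc hR1 hstp ih =>
      obtain ⟨t, hst⟩ := hstp
      obtain ⟨hs, hd0, hd1⟩ := ih
      rcases hstep _ _ _ hst with ⟨-, h1', h2', h3'⟩ | ⟨-, h1', h2', h3'⟩
      · refine ⟨by omega, ?_, ?_⟩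
        · rw [h2']; exact Nat.dvd_add hd0 hgm
        · have hE : Mc 1 = Mb 1 - m := by omega
          rw [hE]; exact Nat.dvd_sub hd1 hgm
      · refine ⟨by omega, ?_, ?_⟩
        · have hE : Mc 0 = Mb 0 - n := by omega
          rw [hE]; exact Nat.dvd_sub hd0 hgn
        · rw [h3']; exact Nat.dvd_add hd1 hgn
  have hdl : ∀ x y : ℕ, g ∣ x → g ∣ y → x < y → x + g ≤ y := by
    intro x y hx hy hxy
    obtain ⟨u, rfl⟩ := hx
    obtain ⟨v, rfl⟩ := hy
    have huv : u < v := Nat.lt_of_mul_lt_mul_left hxy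
    calc g * u + g = g * (u + 1) := by ring
      _ ≤ g * v := Nat.mul_le_mul_left g huv
  constructor
  · -- live → inequality
    intro hlive
    by_contra hc
    push_neg at hc
    have h2g : 2 * g ≤ m + n := by
      have hh1 := Nat.le_of_dvd h1 hgm
      have hh2 := Nat.le_of_dvd h2 hgn
      omega
    have lemA : ∀ k : ℕ, (∃ D, N.Reach M0 D ∧ D 0 < n ∧ D 1 < m) ∨
        ∃ M j, N.Reach M0 M ∧ M 0 + k * n = M0 0 + j * (m + n) := by
      intro k
      induction k with
      | zero => exact Or.inr ⟨M0, 0, Relation.ReflTransGen.refl, by simp⟩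
      | succ k ih =>
        rcases ih with h | ⟨M, j, hR, heq⟩
        · exact Or.inl h
        by_cases hb' : n ≤ M 0
        · have hstb : N.step M b (N.fire M b) := ⟨henb M hb', rfl⟩
          refine Or.inr ⟨N.fire M b, j, Relation.ReflTransGen.tail hR ⟨b, hstb⟩, ?_⟩
          rcases hstep M b _ hstb with ⟨hba, -⟩ | ⟨-, -, hb0, -⟩
          · exact absurd hba.symm hab
          have e1 : (k + 1) * n = k * n + n := by ring
          linarith [heq, hb0, e1]
        · by_cases ha' : m ≤ M 1
          · have hsta : N.step M a (N.fire M a) := ⟨hena M ha', rfl⟩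
            refine Or.inr ⟨N.fire M a, j + 1, Relation.ReflTransGen.tail hR ⟨a, hsta⟩, ?_⟩
            rcases hstep M a _ hsta with ⟨-, -, ha0, -⟩ | ⟨hba, -⟩
            · have e1 : (k + 1) * n = k * n + n := by ring
              have e2 : (j + 1) * (m + n) = j * (m + n) + (m + n) := by ring
              linarith [heq, ha0]
            · exact absurd hba hab
          · exact Or.inl ⟨M, hR, by omega, by omega⟩
    obtain ⟨k, j0, hk⟩ : ∃ k j0 : ℕ, k * n + (M0 0 + M0 1 + g) = M0 0 + j0 * (m + n) := by
      have hgnm : Nat.gcd n (m + n) = g := by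
        rw [Nat.gcd_add_self_right, Nat.gcd_comm, hg]
      have hbez : (g : ℤ) = (n : ℤ) * Nat.gcdA n (m + n) + ((m : ℤ) + n) * Nat.gcdB n (m + n) := by
        have hh := Nat.gcd_eq_gcd_ab n (m + n)
        rw [hgnm] at hh
        push_cast at hh
        linarith
      obtain ⟨c'', hc''⟩ := hg1
      have hc2 : (M0 1 : ℤ) = (g : ℤ) * c'' := by exact_mod_cast hc''
      set A := Nat.gcdA n (m + n) with hA
      set B := Nat.gcdB n (m + n) with hB
      have hPpos : (0 : ℤ) < (m : ℤ) + n := by exact_mod_cast Nat.add_pos_left h1 n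
      set K : ℤ := -A * ((c'' : ℤ) + 1) with hK
      have hdvd1 : ((m : ℤ) + n) ∣ K * n + ((M0 1 : ℤ) + g) :=
        ⟨((c'' : ℤ) + 1) * B, by linear_combination ((c'' : ℤ) + 1) * hbez + hc2⟩
      set K' : ℤ := K % ((m : ℤ) + n) with hK'
      have hK'nn : 0 ≤ K' := Int.emod_nonneg K (ne_of_gt hPpos)
      have hKK : K' = K - ((m : ℤ) + n) * (K / ((m : ℤ) + n)) := Int.emod_def K _
      have hdvd2 : ((m : ℤ) + n) ∣ K' * n + ((M0 1 : ℤ) + g) := by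
        have hE : K' * n + ((M0 1 : ℤ) + g)
            = (K * n + ((M0 1 : ℤ) + g)) - ((m : ℤ) + n) * ((K / ((m : ℤ) + n)) * n) := by
          rw [hKK]; ring
        rw [hE]
        exact dvd_sub hdvd1 (dvd_mul_right _ _)
      obtain ⟨J, hJ⟩ := hdvd2
      have hJnn : 0 ≤ J := by
        have h5 : 0 ≤ K' * (n : ℤ) := mul_nonneg hK'nn (Int.natCast_nonneg n)
        have h6 : 0 ≤ ((m : ℤ) + n) * J := by
          rw [← hJ]
          have h7 := Int.natCast_nonneg (M0 1)
          have h8 := Int.natCast_nonneg g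
          linarith
        by_contra hcc
        push_neg at hcc
        have : ((m : ℤ) + n) * J < 0 := mul_neg_of_pos_of_neg hPpos hcc
        linarith
      refine ⟨K'.toNat, J.toNat, ?_⟩
      zify
      rw [Int.toNat_of_nonneg hK'nn, Int.toNat_of_nonneg hJnn]
      linarith [hJ]
    rcases lemA k with ⟨D, hRD, hD0, hD1⟩ | ⟨M, j, hRM, heq⟩
    · obtain ⟨M', hR', hen'⟩ := hlive a D hRD
      have hM'D : M' = D := by
        rcases (Relation.ReflTransGen.cases_head hR') with h | ⟨cM, ⟨t, hst⟩, -⟩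
        · exact h.symm
        · exfalso
          rcases hstep _ _ _ hst with ⟨-, hx, -, -⟩ | ⟨-, hx, -, -⟩ <;> omega
      have hfin := hen' 1
      rw [hM'D, ← hcons1] at hfin
      omega
    · obtain ⟨hsum', -, -⟩ := hinv M hRM
      have hjlt : j < j0 := by
        rcases Nat.lt_or_ge j j0 with h | h
        · exact h
        · exfalso
          have hmul : j0 * (m + n) ≤ j * (m + n) := Nat.mul_le_mul_right _ h
          have hMge : M0 0 + M0 1 + g ≤ M 0 := by linarith
          omega
      have hmul : (j + 1) * (m + n) ≤ j0 * (m + n) := Nat.mul_le_mul_right _ hjlt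
      have e2 : (j + 1) * (m + n) = j * (m + n) + (m + n) := by ring
      have key : M 0 + (m + n) ≤ M0 0 + M0 1 + g := by linarith
      omega
  · -- inequality → live
    intro hlt
    have claim_a : ∀ x (M : Fin 2 → ℕ), N.Reach M0 M → M 0 ≤ x →
        ∃ M', N.Reach M M' ∧ m ≤ M' 1 := by
      intro x
      induction x with
      | zero =>
        intro M hR h0
        by_cases hma : m ≤ M 1
        · exact ⟨M, Relation.ReflTransGen.refl, hma⟩
        · exfalso
          obtain ⟨hsum', hd0, hd1⟩ := hinv M hR
          have h1' := hdl (M 1) m hd1 hgm (by omega)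
          have h2' := hdl (M 0) n hd0 hgn (by omega)
          omega
      | succ x ih =>
        intro M hR h0
        by_cases hma : m ≤ M 1
        · exact ⟨M, Relation.ReflTransGen.refl, hma⟩
        · obtain ⟨hsum', hd0, hd1⟩ := hinv M hR
          have h1' := hdl (M 1) m hd1 hgm (by omega)
          have h2' : n ≤ M 0 := by
            by_contra hcc
            have := hdl (M 0) n hd0 hgn (by omega)
            omega
          have hstb : N.step M b (N.fire M b) := ⟨henb M h2', rfl⟩
          rcases hstep M b _ hstb with ⟨hba, -⟩ | ⟨-, -, hb0, hb1⟩
          · exact absurd hba.symm hab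
          obtain ⟨M', hRM', hm'⟩ :=
            ih (N.fire M b) (Relation.ReflTransGen.tail hR ⟨b, hstb⟩) (by omega)
          exact ⟨M', Relation.ReflTransGen.head ⟨b, hstb⟩ hRM', hm'⟩
    have claim_b : ∀ x (M : Fin 2 → ℕ), N.Reach M0 M → M 1 ≤ x →
        ∃ M', N.Reach M M' ∧ n ≤ M' 0 := by
      intro x
      induction x with
      | zero =>
        intro M hR h0
        by_cases hmb : n ≤ M 0
        · exact ⟨M, Relation.ReflTransGen.refl, hmb⟩
        · exfalso
          obtain ⟨hsum', hd0, hd1⟩ := hinv M hR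
          have h1' := hdl (M 0) n hd0 hgn (by omega)
          have h2' := hdl (M 1) m hd1 hgm (by omega)
          omega
      | succ x ih =>
        intro M hR h0
        by_cases hmb : n ≤ M 0
        · exact ⟨M, Relation.ReflTransGen.refl, hmb⟩
        · obtain ⟨hsum', hd0, hd1⟩ := hinv M hR
          have h1' := hdl (M 0) n hd0 hgn (by omega)
          have h2' : m ≤ M 1 := by
            by_contra hcc
            have := hdl (M 1) m hd1 hgm (by omega)
            omega
          have hsta : N.step M a (N.fire M a) := ⟨hena M h2', rfl⟩
          rcases hstep M a _ hsta with ⟨-, -, ha0, ha1⟩ | ⟨hba, -⟩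
          · obtain ⟨M', hRM', hm'⟩ :=
              ih (N.fire M a) (Relation.ReflTransGen.tail hR ⟨a, hsta⟩) (by omega)
            exact ⟨M', Relation.ReflTransGen.head ⟨a, hsta⟩ hRM', hm'⟩
          · exact absurd hba hab
    intro t M hR
    rcases hL t with rfl | rfl
    · obtain ⟨M', hR', hm'⟩ := claim_a (M 0) M hR le_rfl
      exact ⟨M', hR', hena M' hm'⟩
    · obtain ⟨M', hR', hm'⟩ := claim_b (M 1) M hR le_rfl
      exact ⟨M', hR', henb M' hm'⟩
end

section
/- Let S=(N,M0) be a conservative binary circuit system over T={a,b} with places p_ab (input a, output b) and p_ba (input b, output a), such that M0(p_ab)=W(p_ab,b) and M0(p_ba)=W(p_ba,a)−gcd_{p_ba}. Then every marking reachable from M0 enables exactly one of the two places. -/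
/-- in a suitably marked conservative binary circuit, every reachable
marking enables exactly one of the two places. -/
theorem stmt16 {L : Type} [Fintype L] [DecidableEq L] (a b : L) (hab : a ≠ b)
    (hcard : Fintype.card L = 2)
    (N : PetriNet (Fin 2) L) (M0 : Fin 2 → ℕ)
    (h1 : 0 < N.post a 0) (h2 : 0 < N.pre 0 b) (h3 : 0 < N.post b 1) (h4 : 0 < N.pre 1 a)
    (hz1 : N.pre 0 a = 0) (hz2 : N.pre 1 b = 0) (hz3 : N.post b 0 = 0) (hz4 : N.post a 1 = 0)
    (hcons : conservative N)
    (hM0ab : M0 0 = N.pre 0 b) (hM0ba : M0 1 = N.pre 1 a - gcdPlace N 1) :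
    ∀ M : Fin 2 → ℕ, N.Reach M0 M →
      (N.placeEnabled M 0 ∧ ¬ N.placeEnabled M 1) ∨
      (¬ N.placeEnabled M 0 ∧ N.placeEnabled M 1) := by
  obtain ⟨X, hX1, hXc⟩ := hcons
  have huniv : (Finset.univ : Finset L) = {a, b} := by
    symm; apply Finset.eq_univ_of_card
    rw [Finset.card_pair hab, hcard]
  have tab : ∀ t : L, t = a ∨ t = b := by
    intro t
    have ht := Finset.mem_univ t
    rw [huniv] at ht
    simpa using ht
  -- conservation equations
  have hCa : X 0 * N.post a 0 = X 1 * N.pre 1 a := by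
    have h := hXc a
    rw [Fin.sum_univ_two, hz1, hz4] at h
    push_cast at h
    exact_mod_cast (by linarith :
      (X 0 : ℤ) * N.post a 0 = (X 1 : ℤ) * N.pre 1 a)
  have hCb : X 0 * N.pre 0 b = X 1 * N.post b 1 := by
    have h := hXc b
    rw [Fin.sum_univ_two, hz2, hz3] at h
    push_cast at h
    exact_mod_cast (by linarith :
      (X 0 : ℤ) * N.pre 0 b = (X 1 : ℤ) * N.post b 1)
  -- the gcd of place 1
  have hgcd : gcdPlace N 1 = Nat.gcd (N.pre 1 a) (N.post b 1) := by
    simp [gcdPlace, huniv, hz2, hz4, Finset.gcd_insert, Finset.gcd_singleton]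
    rfl
  have hgz : gcdPlace N 1 ∣ N.pre 1 a := by rw [hgcd]; exact Nat.gcd_dvd_left _ _
  have hgy : gcdPlace N 1 ∣ N.post b 1 := by rw [hgcd]; exact Nat.gcd_dvd_right _ _
  have hgpos : 0 < gcdPlace N 1 := by
    rw [hgcd]; exact Nat.gcd_pos_of_pos_left _ h4
  have hgle : gcdPlace N 1 ≤ N.pre 1 a := Nat.le_of_dvd h4 hgz
  -- the main invariant
  have main : ∀ M, N.Reach M0 M →
      X 0 * M 0 + X 1 * M 1 = X 0 * N.pre 0 b + X 1 * M0 1 ∧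
      (gcdPlace N 1 : ℤ) ∣ (M 1 : ℤ) := by
    intro M hM
    induction hM with
    | refl =>
      refine ⟨by rw [hM0ab], ?_⟩
      rw [hM0ba]
      have : ((N.pre 1 a - gcdPlace N 1 : ℕ) : ℤ) =
          (N.pre 1 a : ℤ) - (gcdPlace N 1 : ℤ) := by
        push_cast [hgle]; ring
      rw [this]
      exact dvd_sub (Int.natCast_dvd_natCast.mpr hgz) dvd_rfl
    | @tail M1 M2 h1' h2' ih =>
      obtain ⟨t, hen, hfire⟩ := h2'
      rcases tab t with h | h
      · -- fire a
        rw [h] at hen hfire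
        have e0 : M2 0 = M1 0 + N.post a 0 := by
          rw [hfire]; simp [PetriNet.fire, hz1]
        have e1 : M2 1 = M1 1 - N.pre 1 a := by
          rw [hfire]; simp [PetriNet.fire, hz4]
        have hle : N.pre 1 a ≤ M1 1 := hen 1
        constructor
        · rw [e0, e1]
          zify [hle]
          have hs' : (X 0 : ℤ) * M1 0 + X 1 * M1 1 =
              (X 0 : ℤ) * N.pre 0 b + X 1 * M0 1 := by exact_mod_cast ih.1
          have hCa' : (X 0 : ℤ) * N.post a 0 = (X 1 : ℤ) * N.pre 1 a := by
            exact_mod_cast hCa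
          linear_combination hs' + hCa'
        · rw [e1]
          zify [hle]
          exact dvd_sub ih.2 (Int.natCast_dvd_natCast.mpr hgz)
      · -- fire b
        rw [h] at hen hfire
        have e0 : M2 0 = M1 0 - N.pre 0 b := by
          rw [hfire]; simp [PetriNet.fire, hz3]
        have e1 : M2 1 = M1 1 + N.post b 1 := by
          rw [hfire]; simp [PetriNet.fire, hz2]
        have hle : N.pre 0 b ≤ M1 0 := hen 0
        constructor
        · rw [e0, e1]
          zify [hle]
          have hs' : (X 0 : ℤ) * M1 0 + X 1 * M1 1 =
              (X 0 : ℤ) * N.pre 0 b + X 1 * M0 1 := by exact_mod_cast ih.1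
          have hCb' : (X 0 : ℤ) * N.pre 0 b = (X 1 : ℤ) * N.post b 1 := by
            exact_mod_cast hCb
          linear_combination hs' - hCb'
        · rw [e1]
          push_cast
          exact dvd_add ih.2 (Int.natCast_dvd_natCast.mpr hgy)
  -- place enabledness characterizations
  have hpe0 : ∀ M' : Fin 2 → ℕ, N.placeEnabled M' 0 ↔ N.pre 0 b ≤ M' 0 := by
    intro M'
    constructor
    · intro h; exact h b
    · intro h t
      rcases tab t with rfl | rfl
      · rw [hz1]; exact Nat.zero_le _
      · exact h
  have hpe1 : ∀ M' : Fin 2 → ℕ, N.placeEnabled M' 1 ↔ N.pre 1 a ≤ M' 1 := by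
    intro M'
    constructor
    · intro h; exact h a
    · intro h t
      rcases tab t with rfl | rfl
      · exact h
      · rw [hz2]; exact Nat.zero_le _
  intro M hM
  obtain ⟨hsum, hg1⟩ := main M hM
  rw [hM0ba] at hsum
  rcases le_or_gt (N.pre 0 b) (M 0) with h0 | h0
  · left
    refine ⟨(hpe0 M).mpr h0, ?_⟩
    rw [hpe1 M]
    intro h1'
    -- both enabled: contradiction
    have l1 : X 0 * N.pre 0 b ≤ X 0 * M 0 := Nat.mul_le_mul_left _ h0
    have l2 : X 1 * N.pre 1 a ≤ X 1 * M 1 := Nat.mul_le_mul_left _ h1'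
    have hlt : N.pre 1 a - gcdPlace N 1 < N.pre 1 a := by omega
    have l3 : X 1 * (N.pre 1 a - gcdPlace N 1) < X 1 * N.pre 1 a :=
      mul_lt_mul_of_pos_left hlt (by have := hX1 1; omega : 0 < X 1)
    linarith
  · right
    refine ⟨?_, (hpe1 M).mpr ?_⟩
    · rw [hpe0 M]; omega
    · by_contra h1'
      push_neg at h1'
      -- M 1 is a multiple of gcd, below pre 1 a, hence ≤ pre 1 a - gcd
      have hdz : (gcdPlace N 1 : ℤ) ∣ (N.pre 1 a : ℤ) - (M 1 : ℤ) :=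
        dvd_sub (Int.natCast_dvd_natCast.mpr hgz) hg1
      have hpos : (0 : ℤ) < (N.pre 1 a : ℤ) - (M 1 : ℤ) := by
        omega
      have hge := Int.le_of_dvd hpos hdz
      have hm1 : M 1 ≤ N.pre 1 a - gcdPlace N 1 := by omega
      have l1 : X 0 * M 0 < X 0 * N.pre 0 b :=
        mul_lt_mul_of_pos_left h0 (by have := hX1 0; omega : 0 < X 0)
      have l2 : X 1 * M 1 ≤ X 1 * (N.pre 1 a - gcdPlace N 1) :=
        Nat.mul_le_mul_left _ hm1
      linarith
end

section
/- Let S be a weighted marked graph system without source places (no place having an output transition but no input transition). Then S is live if and only if every circuit P-subsystem of S is live. -/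
/-! If some transition dies, choice-freeness (persistence and confluence) provides an input place
of it that stays insufficiently marked forever; the input transition of that place, which exists
since there are no source places, must then die too. At a reachable marking where the set of dead
transitions is maximal, every dead transition thus has a dead predecessor through a starved place;
following predecessors closes a circuit all of whose places are starved, so that circuit
P-subsystem is stuck. Conversely, a P-subsystem of a live choice-free system is choice-free and
simulates every firing sequence, so by Keller's theorem it is live. -/

theorem Fin.val_add_sub_one_mod {k : ℕ} (i : Fin k) :
    (i.val + k - 1) % k = if i.val = 0 then k - 1 else i.val - 1 := by
  split_ifs with h
  · rw [h, zero_add]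
    exact Nat.mod_eq_of_lt (by omega)
  · rw [show i.val + k - 1 = i.val - 1 + k by omega, Nat.add_mod_right]
    exact Nat.mod_eq_of_lt (by omega)

namespace Function

variable {α : Type*}

theorem exists_mem_periodicPts [Finite α] [Nonempty α] (f : α → α) :
    ∃ x, x ∈ periodicPts f := by
  obtain ⟨m, n, hmn, h⟩ :=
    Finite.exists_ne_map_eq_of_infinite fun n => f^[n] (Classical.arbitrary α)
  wlog hlt : m < n generalizing m n
  · exact this n m hmn.symm h.symm (lt_of_le_of_ne (not_lt.1 hlt) hmn.symm)
  refine ⟨f^[m] (Classical.arbitrary α),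
    mk_mem_periodicPts (n := n - m) (Nat.sub_pos_of_lt hlt) ?_⟩
  rw [IsPeriodicPt, IsFixedPt, ← iterate_add_apply, Nat.sub_add_cancel hlt.le]
  exact h.symm

theorem exists_cycle [Finite α] [Nonempty α] (f : α → α) :
    ∃ (k : ℕ) (hk : 0 < k) (c : Fin k → α), Injective c ∧
      ∀ i : Fin k, c ⟨(i.val + k - 1) % k, Nat.mod_lt _ hk⟩ = f (c i) := by
  obtain ⟨x, hx⟩ := exists_mem_periodicPts f
  have hk : 0 < minimalPeriod f (f x) := by
    rw [minimalPeriod_apply hx]; exact minimalPeriod_pos_of_mem_periodicPts hx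
  set k := minimalPeriod f (f x)
  refine ⟨k, hk, fun i => f^[k - 1 - i] (f x), fun i j hij => ?_, fun i => ?_⟩
  · have := iterate_injOn_Iio_minimalPeriod (f := f) (x := f x)
      (show k - 1 - i < k by omega) (show k - 1 - j < k by omega) hij
    exact Fin.ext (by omega)
  · show f^[k - 1 - (i.val + k - 1) % k] (f x) = f (f^[k - 1 - i] (f x))
    rw [← iterate_succ_apply' f, Fin.val_add_sub_one_mod]
    split_ifs with h
    · rw [h, Nat.sub_self, Nat.sub_zero, Nat.succ_eq_add_one, Nat.sub_add_cancel hk,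
        iterate_minimalPeriod]
      rfl
    · congr 1
      omega

end Function

namespace PetriNet

variable {P T : Type} {N : PetriNet P T} {M M' M0 : P → ℕ}

theorem choiceFree.pre_eq_zero (hcf : N.choiceFree) {p : P} {u v : T} (huv : u ≠ v)
    (hv : 0 < N.pre p v) : N.pre p u = 0 :=
  Nat.eq_zero_of_not_pos fun hu => huv (hcf p u v hu hv)

theorem choiceFree.enabled_fire (hcf : N.choiceFree) {u v : T} (huv : u ≠ v)
    (hv : N.enabled M v) : N.enabled (N.fire M u) v := by
  intro p
  rcases Nat.eq_zero_or_pos (N.pre p v) with h | h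
  · simp [h]
  · have := hv p
    simp only [fire, hcf.pre_eq_zero huv h]
    omega

theorem choiceFree.fire_comm (hcf : N.choiceFree) {u v : T} (huv : u ≠ v)
    (hu : N.enabled M u) (hv : N.enabled M v) :
    N.fire (N.fire M u) v = N.fire (N.fire M v) u := by
  funext p
  have := hu p
  have := hv p
  rcases Nat.eq_zero_or_pos (N.pre p v) with h | h
  · simp only [fire, h]; omega
  · simp only [fire, hcf.pre_eq_zero huv h]; omega

theorem choiceFree.reach_join (hcf : N.choiceFree) {M₁ M₂ : P → ℕ}
    (h₁ : N.Reach M M₁) (h₂ : N.Reach M M₂) : ∃ M₃, N.Reach M₁ M₃ ∧ N.Reach M₂ M₃ := by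
  refine Relation.church_rosser (fun M M₁ M₂ h₁ h₂ => ?_) h₁ h₂
  obtain ⟨u, hu, rfl⟩ := h₁
  obtain ⟨v, hv, rfl⟩ := h₂
  by_cases huv : u = v
  · exact ⟨_, Relation.ReflGen.refl, by rw [huv]⟩
  · exact ⟨N.fire (N.fire M u) v, .single ⟨v, hcf.enabled_fire huv hv, rfl⟩,
      .single ⟨u, hcf.enabled_fire (Ne.symm huv) hu, hcf.fire_comm huv hu hv⟩⟩

theorem firable_append {σ ρ : List T} :
    N.firable M (σ ++ ρ) ↔ N.firable M σ ∧ N.firable (N.fireSeq M σ) ρ := by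
  induction σ generalizing M with
  | nil => simp [firable, fireSeq]
  | cons t σ ih => simp [firable, fireSeq, ih, and_assoc]

theorem fireSeq_append {σ ρ : List T} :
    N.fireSeq M (σ ++ ρ) = N.fireSeq (N.fireSeq M σ) ρ := by
  induction σ generalizing M with
  | nil => rfl
  | cons t σ ih => exact ih

theorem reach_iff_firable : N.Reach M M' ↔ ∃ σ, N.firable M σ ∧ N.fireSeq M σ = M' := by
  constructor
  · intro h
    induction h with
    | refl => exact ⟨[], trivial, rfl⟩
    | tail _ hstep ih =>
      obtain ⟨σ, hf, rfl⟩ := ih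
      obtain ⟨t, hen, rfl⟩ := hstep
      exact ⟨σ ++ [t], firable_append.2 ⟨hf, hen, trivial⟩, fireSeq_append⟩
  · rintro ⟨σ, hf, rfl⟩
    induction σ generalizing M with
    | nil => exact .refl
    | cons t σ ih => exact .head ⟨t, hf.1, rfl⟩ (ih hf.2)

theorem exists_enabled_of_mem_firable {σ : List T} {t : T} (hf : N.firable M σ)
    (ht : t ∈ σ) : ∃ M', N.Reach M M' ∧ N.enabled M' t := by
  obtain ⟨σ₁, σ₂, rfl, -⟩ := List.eq_append_cons_of_mem ht
  exact ⟨_, reach_iff_firable.2 ⟨σ₁, (firable_append.1 hf).1, rfl⟩, (firable_append.1 hf).2.1⟩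

theorem choiceFree.firable_fire_of_not_mem (hcf : N.choiceFree) {u : T} {σ : List T}
    (hu : N.enabled M u) (hf : N.firable M σ) (hσ : u ∉ σ) : N.firable (N.fire M u) σ := by
  induction σ generalizing M with
  | nil => trivial
  | cons v σ ih =>
    have huv : u ≠ v := fun h => hσ (h ▸ List.mem_cons_self)
    refine ⟨hcf.enabled_fire huv hf.1, ?_⟩
    rw [hcf.fire_comm huv hu hf.1]
    exact ih (hcf.enabled_fire (Ne.symm huv) hu) hf.2 fun h => hσ (List.mem_cons_of_mem _ h)

theorem choiceFree.firable_fire_of_mem (hcf : N.choiceFree) {u : T} {σ₁ σ₂ : List T}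
    (hu : N.enabled M u) (hf : N.firable M (σ₁ ++ u :: σ₂)) (hσ₁ : u ∉ σ₁) :
    N.firable (N.fire M u) (σ₁ ++ σ₂) := by
  induction σ₁ generalizing M with
  | nil => exact hf.2
  | cons v σ₁ ih =>
    have huv : u ≠ v := fun h => hσ₁ (h ▸ List.mem_cons_self)
    refine ⟨hcf.enabled_fire huv hf.1, ?_⟩
    rw [hcf.fire_comm huv hu hf.1]
    exact ih (hcf.enabled_fire (Ne.symm huv) hu) hf.2 fun h => hσ₁ (List.mem_cons_of_mem _ h)

/-- Keller's theorem for choice-free nets. -/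
theorem choiceFree.exists_firable_le_add (hcf : N.choiceFree) {α β : List T}
    (hα : N.firable M α) (hβ : N.firable M β) :
    ∃ γ, N.firable (N.fireSeq M α) γ ∧ (β : Multiset T) ≤ α + γ := by
  induction α generalizing M β with
  | nil => exact ⟨β, hβ, by simp⟩
  | cons t α ih =>
    by_cases ht : t ∈ β
    · obtain ⟨β₁, β₂, rfl, hβ₁⟩ := List.eq_append_cons_of_mem ht
      obtain ⟨γ, hγ, hle⟩ := ih hα.2 (hcf.firable_fire_of_mem hα.1 hβ hβ₁)
      refine ⟨γ, hγ, ?_⟩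
      rw [Multiset.coe_eq_coe.2 List.perm_middle, ← Multiset.cons_coe, ← Multiset.cons_coe,
        Multiset.cons_add]
      exact Multiset.cons_le_cons t hle
    · obtain ⟨γ, hγ, hle⟩ := ih hα.2 (hcf.firable_fire_of_not_mem hα.1 hβ ht)
      refine ⟨γ, hγ, hle.trans ?_⟩
      rw [← Multiset.cons_coe, Multiset.cons_add]
      exact Multiset.le_cons_self _ t

theorem live.exists_firable_le (hl : N.live M0) (hM : N.Reach M0 M) (L : List T) :
    ∃ σ, N.firable M σ ∧ (L : Multiset T) ≤ σ := by
  induction L generalizing M with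
  | nil => exact ⟨[], trivial, by simp⟩
  | cons t L ih =>
    obtain ⟨M', hr, ht⟩ := hl t M hM
    obtain ⟨ρ, hρ, rfl⟩ := reach_iff_firable.1 hr
    obtain ⟨σ, hσ, hle⟩ := ih ((hM.trans hr).tail ⟨t, ht, rfl⟩)
    refine ⟨ρ ++ t :: σ, firable_append.2 ⟨hρ, ht, hσ⟩, ?_⟩
    rw [Multiset.coe_eq_coe.2 List.perm_middle, ← Multiset.cons_coe]
    exact Multiset.cons_le_cons t
      (hle.trans (Multiset.coe_le.2 (List.sublist_append_right ρ σ).subperm))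

section restrictNet

variable {k : ℕ} {π : Fin k → P}

theorem choiceFree.restrictNet (hcf : N.choiceFree) : (restrictNet N π).choiceFree :=
  fun i => hcf (π i)

theorem firable.restrictNet {σ : List T} (hf : N.firable M σ) :
    (restrictNet N π).firable (fun i => M (π i)) σ := by
  induction σ generalizing M with
  | nil => trivial
  | cons t σ ih => exact ⟨fun i => hf.1 (π i), ih hf.2⟩

theorem Reach.restrictNet (h : N.Reach M M') :
    (restrictNet N π).Reach (fun i => M (π i)) (fun i => M' (π i)) := by
  induction h with
  | refl => exact .refl
  | tail _ hstep ih =>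
    obtain ⟨t, ht, rfl⟩ := hstep
    exact ih.tail ⟨t, fun i => ht (π i), rfl⟩

theorem live.restrictNet (hcf : N.choiceFree) (hl : N.live M0) :
    (restrictNet N π).live (fun i => M0 (π i)) := by
  classical
  intro t m hm
  obtain ⟨σ₀, hσ₀, rfl⟩ := reach_iff_firable.1 hm
  obtain ⟨σ, hσ, hle⟩ := hl.exists_firable_le .refl (σ₀ ++ [t])
  obtain ⟨γ, hγ, hle'⟩ := hcf.restrictNet.exists_firable_le_add hσ₀ hσ.restrictNet
  have htγ : t ∈ γ := by
    have := Multiset.count_le_of_le t (hle.trans hle')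
    simp only [Multiset.coe_count, Multiset.count_add, List.count_append,
      List.count_singleton_self] at this
    exact List.count_pos_iff.1 (by omega)
  exact exists_enabled_of_mem_firable hγ htγ

end restrictNet

def dead (N : PetriNet P T) (t : T) (M : P → ℕ) : Prop :=
  ∀ M', N.Reach M M' → ¬ N.enabled M' t

def starves (N : PetriNet P T) (p : P) (t : T) (M : P → ℕ) : Prop :=
  ∀ M', N.Reach M M' → M' p < N.pre p t

variable {p : P} {t : T}

theorem dead.mono (hd : N.dead t M) (hr : N.Reach M M') : N.dead t M' :=
  fun M'' hr' => hd M'' (hr.trans hr')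

theorem starves.pre_pos (hs : N.starves p t M) : 0 < N.pre p t :=
  (Nat.zero_le _).trans_lt (hs M .refl)

theorem starves.dead (hs : N.starves p t M) : N.dead t M :=
  fun M' hr ht => (ht p).not_gt (hs M' hr)

/-- In a choice-free net `t` is the only output transition of `p`, and it never fires. -/
theorem dead.le_of_reach (hcf : N.choiceFree) (hd : N.dead t M) (hp : 0 < N.pre p t)
    (hr : N.Reach M M') : M p ≤ M' p := by
  induction hr with
  | refl => exact le_rfl
  | tail hr' hstep ih =>
    obtain ⟨u, hu, rfl⟩ := hstep
    have hut : u ≠ t := fun h => hd _ hr' (h ▸ hu)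
    simp only [fire, hcf.pre_eq_zero hut hp]
    omega

theorem dead.pre_le_of_reach (hcf : N.choiceFree) (hd : N.dead t M) (hp : N.pre p t ≤ M p)
    (hr : N.Reach M M') : N.pre p t ≤ M' p := by
  rcases Nat.eq_zero_or_pos (N.pre p t) with h | h
  · omega
  · exact hp.trans (hd.le_of_reach hcf h hr)

theorem dead.exists_starves [Finite P] (hcf : N.choiceFree) (hd : N.dead t M) :
    ∃ p, N.starves p t M := by
  classical
  have := Fintype.ofFinite P
  by_contra! hfill
  simp only [starves, not_forall, not_lt] at hfill
  have hjoin : ∀ s : Finset P, ∃ Ms, N.Reach M Ms ∧ ∀ p ∈ s, N.pre p t ≤ Ms p := by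
    intro s
    induction s using Finset.induction_on with
    | empty => exact ⟨M, .refl, by simp⟩
    | insert p s _ ih =>
      obtain ⟨M₁, hr₁, h₁⟩ := ih
      obtain ⟨M₂, hr₂, h₂⟩ := hfill p
      obtain ⟨M₃, hr₁₃, hr₂₃⟩ := hcf.reach_join hr₁ hr₂
      refine ⟨M₃, hr₁.trans hr₁₃, fun q hq => ?_⟩
      rcases Finset.mem_insert.1 hq with rfl | hq
      · exact (hd.mono hr₂).pre_le_of_reach hcf h₂ hr₂₃
      · exact (hd.mono hr₁).pre_le_of_reach hcf (h₁ q hq) hr₁₃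
  obtain ⟨Ms, hr, hMs⟩ := hjoin Finset.univ
  exact hd Ms hr fun p => hMs p (Finset.mem_univ p)

/-- Firing the input transition `t'` of a starved place adds a token to it each time, so `t'`
can fire only boundedly often and eventually dies. -/
theorem starves.exists_dead_of_post_pos (hcf : N.choiceFree) (hs : N.starves p t M) {t' : T}
    (ht' : 0 < N.post t' p) : ∃ M', N.Reach M M' ∧ N.dead t' M' := by
  by_contra! halive
  simp only [PetriNet.dead, not_forall, not_not, exists_prop] at halive
  have hgrow : ∀ n, ∃ M', N.Reach M M' ∧ M p + n ≤ M' p := by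
    intro n
    induction n with
    | zero => exact ⟨M, .refl, le_rfl⟩
    | succ n ih =>
      obtain ⟨M₁, hr₁, h₁⟩ := ih
      obtain ⟨M₂, hr₂, hen⟩ := halive M₁ hr₁
      have ht't : t' ≠ t := fun h => hs.dead M₂ (hr₁.trans hr₂) (h ▸ hen)
      have hle := (hs.dead.mono hr₁).le_of_reach hcf hs.pre_pos hr₂
      refine ⟨_, (hr₁.trans hr₂).tail ⟨t', hen, rfl⟩, ?_⟩
      simp only [fire, hcf.pre_eq_zero ht't hs.pre_pos]
      omega
  obtain ⟨M', hr, hM'⟩ := hgrow (N.pre p t)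
  exact (hs M' hr).not_ge (by omega)

/-- Take a marking where the set of dead transitions is maximal. -/
theorem dead.exists_reach_closed [Finite P] [Finite T] (hcf : N.choiceFree)
    (hnosource : ∀ p : P, (∃ t, 0 < N.pre p t) → ∃ t, 0 < N.post t p) (hd : N.dead t M) :
    ∃ M', N.Reach M M' ∧ N.dead t M' ∧
      ∀ u, N.dead u M' → ∃ p u', N.starves p u M' ∧ 0 < N.post u' p ∧ N.dead u' M' := by
  obtain ⟨M', hr, hmax⟩ := Set.Finite.exists_maximalFor' (fun M' => {u | N.dead u M'})
    {M' | N.Reach M M'} (Set.toFinite _) ⟨M, .refl⟩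
  refine ⟨M', hr, hd.mono hr, fun u hu => ?_⟩
  obtain ⟨p, hp⟩ := hu.exists_starves hcf
  obtain ⟨u', hu'⟩ := hnosource p ⟨u, hp.pre_pos⟩
  obtain ⟨M₁, hr₁, hd₁⟩ := hp.exists_dead_of_post_pos hcf hu'
  exact ⟨p, u', hp, hu', hmax (hr.trans hr₁) (fun v hv => dead.mono hv hr₁) hd₁⟩

theorem dead.exists_starved_circuit [Finite P] [Finite T] (hwmg : N.wmg)
    (hnosource : ∀ p : P, (∃ t, 0 < N.pre p t) → ∃ t, 0 < N.post t p) (hd : N.dead t M) :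
    ∃ (M' : P → ℕ) (k : ℕ) (hk : 0 < k) (π : Fin k → P) (τ : Fin k → T),
      N.Reach M M' ∧ Function.Injective π ∧ Function.Injective τ ∧
      (∀ (i : Fin k) (u : T), 0 < N.pre (π i) u ↔ u = τ i) ∧
      (∀ (i : Fin k) (u : T),
        0 < N.post u (π i) ↔ u = τ ⟨(i.val + k - 1) % k, Nat.mod_lt _ hk⟩) ∧
      ∀ i, M' (π i) < N.pre (π i) (τ i) := by
  obtain ⟨M', hr, hd', hclosed⟩ := hd.exists_reach_closed hwmg.1 hnosource
  choose place pred hstarves hpost hpred using hclosed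
  have : Nonempty {u // N.dead u M'} := ⟨⟨t, hd'⟩⟩
  obtain ⟨k, hk, c, hc, hcycle⟩ :=
    Function.exists_cycle fun u : {u // N.dead u M'} => ⟨pred u.1 u.2, hpred u.1 u.2⟩
  set τ : Fin k → T := fun i => (c i).1
  set π : Fin k → P := fun i => place (c i).1 (c i).2
  have hpre : ∀ i, 0 < N.pre (π i) (τ i) := fun i => (hstarves _ _).pre_pos
  have hpost' : ∀ i, 0 < N.post (τ ⟨(i.val + k - 1) % k, Nat.mod_lt _ hk⟩) (π i) := by
    intro i
    simp only [τ, hcycle i]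
    exact hpost _ _
  have hτ : Function.Injective τ := Subtype.val_injective.comp hc
  refine ⟨M', k, hk, π, τ, hr, fun i j h => hτ (hwmg.1 _ _ _ (hpre i) (h ▸ hpre j)), hτ,
    fun i u => ⟨fun h => hwmg.1 _ _ _ h (hpre i), fun h => h ▸ hpre i⟩,
    fun i u => ⟨fun h => hwmg.2 _ _ _ h (hpost' i), fun h => h ▸ hpost' i⟩,
    fun i => hstarves _ _ M' .refl⟩

theorem reach_eq_of_forall_enabled_fire_eq (h : ∀ t, N.enabled M t → N.fire M t = M)
    (hr : N.Reach M M') : M' = M := by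
  induction hr with
  | refl => rfl
  | tail _ hstep ih =>
    obtain ⟨t, ht, rfl⟩ := hstep
    subst ih
    exact h t ht

theorem not_live_restrictNet {k : ℕ} {π : Fin k → P} (hM : N.Reach M0 M)
    (hblocked : ∀ (u : T) (i : Fin k), 0 < N.pre (π i) u ∨ 0 < N.post u (π i) →
      ∃ j, M (π j) < N.pre (π j) u)
    (i₀ : Fin k) (ht : M (π i₀) < N.pre (π i₀) t) :
    ¬ (restrictNet N π).live (fun i => M0 (π i)) := by
  intro hl
  obtain ⟨m, hr, hen⟩ := hl t _ hM.restrictNet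
  have hstuck : ∀ u, (restrictNet N π).enabled (fun i => M (π i)) u →
      (restrictNet N π).fire (fun i => M (π i)) u = fun i => M (π i) := by
    intro u hu
    funext i
    by_cases hi : 0 < N.pre (π i) u ∨ 0 < N.post u (π i)
    · obtain ⟨j, hj⟩ := hblocked u i hi
      exact absurd (hu j) (not_le.2 hj)
    · simp only [not_or, not_lt, Nat.le_zero] at hi
      simp [fire, restrictNet, hi.1, hi.2]
  rw [reach_eq_of_forall_enabled_fire_eq hstuck hr] at hen
  exact (hen i₀).not_gt ht

end PetriNet

/-- a WMG without source places is live iff every circuit P-subsystem is live. -/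
theorem stmt17 {Pl T : Type} [Fintype Pl] [Fintype T] (N : PetriNet Pl T) (M0 : Pl → ℕ)
    (hwmg : N.wmg)
    (hnosource : ∀ p : Pl, (∃ t, 0 < N.pre p t) → ∃ t, 0 < N.post t p) :
    N.live M0 ↔
      ∀ (k : ℕ) (hk : 0 < k) (π : Fin k → Pl) (τ : Fin k → T),
        Function.Injective π → Function.Injective τ →
        (∀ (i : Fin k) (t : T), 0 < N.pre (π i) t ↔ t = τ i) →
        (∀ (i : Fin k) (t : T),
          0 < N.post t (π i) ↔ t = τ ⟨(i.val + k - 1) % k, Nat.mod_lt _ hk⟩) →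
        (restrictNet N π).live (fun i => M0 (π i)) := by
  refine ⟨fun hl _ _ _ _ _ _ _ _ => hl.restrictNet hwmg.1, fun hcircuits => ?_⟩
  by_contra hnl
  obtain ⟨t, M, hM, hd⟩ : ∃ t M, N.Reach M0 M ∧ N.dead t M := by
    simpa [PetriNet.live, PetriNet.dead] using hnl
  obtain ⟨M', k, hk, π, τ, hr, hπ, hτ, hpre, hpost, hstarved⟩ :=
    hd.exists_starved_circuit hwmg hnosource
  refine PetriNet.not_live_restrictNet (hM.trans hr) (fun u i hu => ?_) ⟨0, hk⟩ (hstarved _)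
    (hcircuits k hk π τ hπ hτ hpre hpost)
  rcases hu with hu | hu
  · exact ⟨i, (hpre i u).1 hu ▸ hstarved i⟩
  · exact ⟨_, (hpost i u).1 hu ▸ hstarved _⟩
end

section
/- Let T be a finite nonempty set and let Υ∈ℕ^T be a T-vector with Υ(t)≥1 for every t∈T and with gcd of its components equal to 1 (a prime T-vector with full support). Then there exists a word w over T with Parikh vector P(w)=Υ and a weighted marked graph system with transition set T that solves the circular LTS induced by w (weak synthesis of a WMG with circular reachability graph). -/
/-!
The word is written greedily: the `k`-th occurrence of the letter `t` (for `k < Υ t`) is scheduled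
at time `k / Υ t`, ties being broken by a fixed ranking of the letters. For each ordered pair
`(i, l)` of distinct letters, a place with input `i` (weight `Υ l`) and output `l` (weight `Υ i`)
carries the imbalance `Υ l · #i - Υ i · #l` of the prefix read so far, shifted so that its minimum
over a period is `0`. The next letter of the word is always enabled, and since the schedule keeps
every imbalance within one weight of its minimum, the place `(c, t)` disables every `t` other than
the next letter `c`. Two markings `m` and `m'` steps into the period coincide only if
`ΣΥ ∣ Υ t · (m - m')` for all `t`, which forces `m = m'` because `Υ` is prime.
-/

lemma Prod.Lex.fst_add_lt_of_toLex_add_lt_swap {α β : Type*} [AddCommMonoid α] [Preorder α]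
    [AddCommMonoid β] [Preorder β] {x y x' y' : α} {r s : β}
    (h : toLex (x, r) + toLex (y, s) < toLex (x', s) + toLex (y', r)) : x + y < x' + y' := by
  rcases Prod.Lex.toLex_lt_toLex.1 h with h | ⟨-, h⟩
  · exact h
  · change r + s < s + r at h
    exact absurd h (add_comm r s ▸ lt_irrefl _)

lemma Finset.dvd_of_dvd_mul_of_gcd_eq_one {ι : Type*} {s : Finset ι} {a : ι → ℕ}
    (hs : s.gcd a = 1) {K d : ℕ} (h : ∀ i ∈ s, K ∣ a i * d) : K ∣ d := by
  have := Finset.dvd_gcd (f := fun i => d * a i) fun i hi => mul_comm (a i) d ▸ h i hi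
  rwa [Finset.gcd_mul_left, hs, mul_one, normalize_eq] at this

section Restrict

variable {P T : Type} {k : ℕ} (N : PetriNet P T) {π : Fin k → P}

lemma restrictNet_enabled_comp_iff (hπ : π.Surjective) (M : P → ℕ) (t : T) :
    (restrictNet N π).enabled (M ∘ π) t ↔ N.enabled M t :=
  ⟨fun h p => by obtain ⟨i, rfl⟩ := hπ p; exact h i, fun h i => h (π i)⟩

lemma restrictNet_fire_comp (M : P → ℕ) (t : T) :
    (restrictNet N π).fire (M ∘ π) t = N.fire M t ∘ π := rfl

lemma PetriNet.wmg.restrictNet (h : N.wmg) : (restrictNet N π).wmg :=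
  ⟨fun i => h.1 (π i), fun i => h.2 (π i)⟩

end Restrict

namespace PetriNet

variable {P T : Type}

structure IsFiringCycle (N : PetriNet P T) (w : List T) (M : ℕ → P → ℕ) : Prop where
  period : M w.length = M 0
  enabled : ∀ m (hm : m < w.length), N.enabled (M m) w[m]
  fire : ∀ m (hm : m < w.length), N.fire (M m) w[m] = M (m + 1)
  eq_of_enabled : ∀ m (hm : m < w.length) t, N.enabled (M m) t → t = w[m]
  injOn : Set.InjOn M (Set.Iio w.length)

namespace IsFiringCycle

variable {N : PetriNet P T} {w : List T} {M : ℕ → P → ℕ}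

lemma step_iff (h : N.IsFiringCycle w M) {m : ℕ} (hm : m < w.length) (t : T) (M' : P → ℕ) :
    N.step (M m) t M' ↔ t = w[m] ∧ M' = M ((m + 1) % w.length) := by
  have hsucc : M ((m + 1) % w.length) = M (m + 1) := by
    rcases (Nat.add_one_le_of_lt hm).lt_or_eq with hlt | heq
    · rw [Nat.mod_eq_of_lt hlt]
    · rw [heq, Nat.mod_self, h.period]
  rw [hsucc]
  constructor
  · rintro ⟨hen, rfl⟩
    obtain rfl := h.eq_of_enabled m hm t hen
    exact ⟨rfl, h.fire m hm⟩
  · rintro ⟨rfl, rfl⟩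
    exact ⟨h.enabled m hm, (h.fire m hm).symm⟩

lemma reach_iff (h : N.IsFiringCycle w M) (hw : 0 < w.length) (M' : P → ℕ) :
    N.Reach (M 0) M' ↔ ∃ m < w.length, M m = M' := by
  constructor
  · intro hreach
    induction hreach with
    | refl => exact ⟨0, hw, rfl⟩
    | tail _ hlast ih =>
      obtain ⟨m, hm, rfl⟩ := ih
      obtain ⟨t, ht⟩ := hlast
      exact ⟨_, Nat.mod_lt _ hw, ((h.step_iff hm t _).1 ht).2.symm⟩
  · rintro ⟨m, hm, rfl⟩
    induction m with
    | zero => exact .refl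
    | succ m ih =>
      exact .tail (ih (by omega)) ⟨w[m], h.enabled m (by omega), (h.fire m (by omega)).symm⟩

theorem solves (h : N.IsFiringCycle w M) (hw : 0 < w.length) :
    Solves N (M 0) (circLTS w hw) := by
  let f : Fin w.length → {M' // N.Reach (M 0) M'} :=
    fun i => ⟨M i, (h.reach_iff hw _).2 ⟨i, i.2, rfl⟩⟩
  have hf : Function.Bijective f := by
    refine ⟨fun i j hij => Fin.ext (h.injOn i.2 j.2 (congrArg Subtype.val hij)), fun s => ?_⟩
    obtain ⟨m, hm, hs⟩ := (h.reach_iff hw s.1).1 s.2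
    exact ⟨⟨m, hm⟩, Subtype.ext hs⟩
  have htr : ∀ i j t, (N.RG (M 0)).tr (f i) t (f j) ↔ (circLTS w hw).tr i t j := by
    intro i j t
    simp only [RG, circLTS, f, h.step_iff i.2, List.get_eq_getElem]
    exact and_congr_right fun _ =>
      ⟨fun heq => h.injOn j.2 (Nat.mod_lt _ hw) heq, fun heq => by rw [heq]⟩
  let e := Equiv.ofBijective f hf
  refine ⟨e.symm, e.symm_apply_eq.2 rfl, fun s t s' => ?_⟩
  rw [← htr, ← e.apply_symm_apply s, ← e.apply_symm_apply s']
  simp only [Equiv.symm_apply_apply]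
  rfl

lemma restrictNet {k : ℕ} {π : Fin k → P} (h : N.IsFiringCycle w M) (hπ : π.Surjective) :
    (_root_.restrictNet N π).IsFiringCycle w (fun m => M m ∘ π) where
  period := by simp only [h.period]
  enabled m hm := (restrictNet_enabled_comp_iff N hπ _ _).2 (h.enabled m hm)
  fire m hm := by rw [restrictNet_fire_comp, h.fire m hm]
  eq_of_enabled m hm t ht :=
    h.eq_of_enabled m hm t ((restrictNet_enabled_comp_iff N hπ _ _).1 ht)
  injOn _ hm _ hm' heq := h.injOn hm hm' (hπ.injective_comp_right heq)

end IsFiringCycle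

end PetriNet

namespace Balanced

noncomputable section

section Schedule

variable {L : Type} [Fintype L] (a : L → ℕ)

def rank (t : L) : ℕ := Fintype.equivFin L t

/-- The key of the `k`-th occurrence (counted from `0`) of the letter `t`: occurrences are
scheduled by increasing `k / a t`, ties being broken by a fixed ranking of the letters. -/
def eventKey (k : ℕ) (t : L) : ℚ ×ₗ ℕ := toLex ((k : ℚ) / a t, rank t)

lemma eventKey_ne_of_ne {k k' : ℕ} {t t' : L} (h : t ≠ t') : eventKey a k t ≠ eventKey a k' t' :=
  fun he => h <| (Fintype.equivFin L).injective <| Fin.ext (congrArg (fun x => (ofLex x).2) he)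

lemma eventKey_strictMono (ha : ∀ t, 0 < a t) (t : L) : StrictMono fun k => eventKey a k t :=
  fun _ _ hk => Prod.Lex.toLex_lt_toLex.2 <| .inl <|
    div_lt_div_of_pos_right (by exact_mod_cast hk) (by exact_mod_cast ha t)

variable [Nonempty L]

def nextLetter (N : L → ℕ) : L :=
  (Finset.univ.exists_min_image (fun t => eventKey a (N t) t) Finset.univ_nonempty).choose

lemma eventKey_nextLetter_le (N : L → ℕ) (t : L) :
    eventKey a (N (nextLetter a N)) (nextLetter a N) ≤ eventKey a (N t) t :=
  (Finset.univ.exists_min_image (fun t => eventKey a (N t) t)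
    Finset.univ_nonempty).choose_spec.2 t (Finset.mem_univ t)

lemma nextLetter_lt (ha : ∀ t, 0 < a t) {N : L → ℕ} {t : L} (ht : N t < a t) :
    N (nextLetter a N) < a (nextLetter a N) := by
  have hle := Prod.Lex.monotone_fst _ _ (eventKey_nextLetter_le a N t)
  simp only [eventKey, ofLex_toLex] at hle
  have hlt : (N t : ℚ) / a t < 1 := (div_lt_one (by exact_mod_cast ha t)).2 (by exact_mod_cast ht)
  exact_mod_cast (div_lt_one (by exact_mod_cast ha _)).1 (hle.trans_lt hlt)

variable [DecidableEq L]

def count : ℕ → L → ℕ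
  | 0 => 0
  | m + 1 => count m + Pi.single (nextLetter a (count m)) 1

def letter (m : ℕ) : L := nextLetter a (count a m)

def word : List L := (List.range (∑ t, a t)).map (letter a)

lemma count_succ (m : ℕ) : count a (m + 1) = count a m + Pi.single (letter a m) 1 := rfl

lemma sum_count (m : ℕ) : ∑ t, count a m t = m := by
  induction m with
  | zero => simp [count]
  | succ m ih => simp [count_succ, Finset.sum_add_distrib, ih]

lemma count_map_letter (m : ℕ) (t : L) :
    ((List.range m).map (letter a)).count t = count a m t := by
  induction m with
  | zero => simp [count]
  | succ m ih =>
    rw [List.range_succ, List.map_append, List.count_append, ih, count_succ]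
    by_cases h : t = letter a m
    · subst h; simp
    · simp [h, Ne.symm h]

lemma eventKey_lt_of_lt_count (ha : ∀ t, 0 < a t) (m : ℕ) {t t' : L} {k k' : ℕ}
    (hk : k < count a m t) (hk' : count a m t' ≤ k') : eventKey a k t < eventKey a k' t' := by
  induction m generalizing k k' with
  | zero => simp [count] at hk
  | succ m ih =>
    simp only [count_succ, Pi.add_apply, Pi.single_apply] at hk hk'
    by_cases hkc : k < count a m t
    · exact ih hkc (le_trans (Nat.le_add_right _ _) hk')
    obtain ⟨rfl, rfl⟩ : t = letter a m ∧ k = count a m (letter a m) := by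
      split_ifs at hk with h
      · subst h; exact ⟨rfl, by omega⟩
      · omega
    by_cases ht' : t' = letter a m
    · subst ht'
      exact eventKey_strictMono a ha _ (by simp at hk'; omega)
    · rw [if_neg ht'] at hk'
      refine lt_of_le_of_ne ((eventKey_nextLetter_le a _ t').trans ?_)
        (eventKey_ne_of_ne a (Ne.symm ht'))
      exact (eventKey_strictMono a ha t').monotone (by simpa using hk')

lemma exists_count_lt {m : ℕ} (hm : m < ∑ t, a t) : ∃ t, count a m t < a t := by
  by_contra! h
  have := Finset.sum_le_sum fun t (_ : t ∈ Finset.univ) => h t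
  rw [sum_count] at this
  omega

lemma count_le (ha : ∀ t, 0 < a t) {m : ℕ} (hm : m ≤ ∑ t, a t) : count a m ≤ a := by
  induction m with
  | zero => intro t; simp [count]
  | succ m ih =>
    obtain ⟨t, ht⟩ := exists_count_lt a hm
    have hc := nextLetter_lt a ha ht
    intro s
    have := ih (by omega) s
    simp only [count_succ, Pi.add_apply, Pi.single_apply]
    split_ifs with h
    · subst h; exact hc
    · simpa using this

lemma count_sum (ha : ∀ t, 0 < a t) : count a (∑ t, a t) = a := by
  funext t
  refine (Finset.sum_eq_sum_iff_of_le fun s _ => count_le a ha le_rfl s).1 ?_ t (Finset.mem_univ t)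
  rw [sum_count]

lemma count_word (ha : ∀ t, 0 < a t) (t : L) : (word a).count t = a t := by
  rw [word, count_map_letter, count_sum a ha]

lemma length_word : (word a).length = ∑ t, a t := by simp [word]

lemma getElem_word {m : ℕ} (hm : m < (word a).length) : (word a)[m] = letter a m := by
  simp [word]

def imbalance (m : ℕ) (i l : L) : ℤ := a l * count a m i - a i * count a m l

lemma imbalance_succ (m : ℕ) (i l : L) :
    imbalance a (m + 1) i l = imbalance a m i l + (if letter a m = i then (a l : ℤ) else 0)
      - (if letter a m = l then (a i : ℤ) else 0) := by
  simp only [imbalance, count_succ, Pi.add_apply, Pi.single_apply, eq_comm (a := i),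
    eq_comm (a := l)]
  split_ifs <;> push_cast <;> ring

lemma imbalance_zero (i l : L) : imbalance a 0 i l = 0 := by simp [imbalance, count]

lemma imbalance_sum (ha : ∀ t, 0 < a t) (i l : L) : imbalance a (∑ t, a t) i l = 0 := by
  simp only [imbalance, count_sum a ha]; ring

lemma sum_imbalance (m : ℕ) (i : L) :
    ∑ l, imbalance a m i l = (∑ t, a t : ℕ) * (count a m i : ℤ) - a i * m := by
  simp only [imbalance, Finset.sum_sub_distrib, ← Finset.sum_mul, ← Finset.mul_sum,
    ← Nat.cast_sum, sum_count]

lemma imbalance_sub_lt (ha : ∀ t, 0 < a t) (m r : ℕ) {l : L} (hl : l ≠ letter a m) :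
    imbalance a m (letter a m) l - imbalance a r (letter a m) l < a (letter a m) := by
  set c := letter a m
  have hc : (0 : ℚ) < a c := by exact_mod_cast ha c
  have hl0 : (0 : ℚ) < a l := by exact_mod_cast ha l
  have hnext : eventKey a (count a m c) c < eventKey a (count a m l) l :=
    lt_of_le_of_ne (eventKey_nextLetter_le a _ l) (eventKey_ne_of_ne a hl.symm)
  rcases Nat.eq_zero_or_pos (count a r l) with h0 | hpos
  · have hle := Prod.Lex.monotone_fst _ _ hnext.le
    simp only [eventKey, ofLex_toLex, div_le_div_iff₀ hc hl0] at hle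
    have hle' : (count a m c : ℤ) * a l ≤ count a m l * a c := by exact_mod_cast hle
    have hr : (0 : ℤ) ≤ a l * count a r c := by positivity
    have hc' : (0 : ℤ) < a c := by exact_mod_cast ha c
    simp only [imbalance, h0, Nat.cast_zero, mul_zero]
    linarith
  · have hlast : eventKey a (count a r l - 1) l < eventKey a (count a r c) c :=
      eventKey_lt_of_lt_count a ha r (by omega) le_rfl
    -- adding the two key inequalities cancels the ranks
    have hsum := Prod.Lex.fst_add_lt_of_toLex_add_lt_swap (add_lt_add hnext hlast)
    rw [Nat.cast_sub hpos, Nat.cast_one] at hsum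
    field_simp at hsum
    have hq : ((imbalance a m c l - imbalance a r c l : ℤ) : ℚ) < a c := by
      simp only [imbalance]
      push_cast
      linarith
    exact_mod_cast hq

end Schedule

section PairNet

variable {L : Type} [DecidableEq L] (a : L → ℕ)

/-- After `m` steps the marking of the place `(i, l)` is `imbalance a m i l`, up to a constant
offset. -/
def pairNet : PetriNet {q : L × L // q.1 ≠ q.2} L where
  pre q t := if t = q.1.2 then a q.1.1 else 0
  post t q := if t = q.1.1 then a q.1.2 else 0

lemma pairNet_wmg : (pairNet a).wmg := by
  refine ⟨fun q t t' h h' => ?_, fun q t t' h h' => ?_⟩ <;>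
  · simp only [pairNet] at h h'
    split_ifs at h h' with e e' <;> first | exact e.trans e'.symm | omega

variable [Fintype L] [Nonempty L]

def minImbalance (i l : L) : ℤ :=
  (Finset.range (∑ t, a t + 1)).inf' Finset.nonempty_range_add_one (imbalance a · i l)

lemma minImbalance_le {m : ℕ} (hm : m ≤ ∑ t, a t) (i l : L) :
    minImbalance a i l ≤ imbalance a m i l :=
  Finset.inf'_le _ (Finset.mem_range.2 (by omega))

lemma exists_imbalance_eq_minImbalance (i l : L) : ∃ r, imbalance a r i l = minImbalance a i l :=
  let ⟨r, _, hr⟩ := Finset.exists_mem_eq_inf' Finset.nonempty_range_add_one (imbalance a · i l)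
  ⟨r, hr.symm⟩

def marking (m : ℕ) (q : {q : L × L // q.1 ≠ q.2}) : ℕ :=
  (imbalance a m q.1.1 q.1.2 - minImbalance a q.1.1 q.1.2).toNat

lemma marking_sum (ha : ∀ t, 0 < a t) : marking a (∑ t, a t) = marking a 0 := by
  funext q
  rw [marking, marking, imbalance_sum a ha, imbalance_zero]

lemma pairNet_enabled_letter {m : ℕ} (hm : m < ∑ t, a t) :
    (pairNet a).enabled (marking a m) (letter a m) := by
  intro q
  simp only [pairNet]
  split_ifs with h
  · have hsucc := imbalance_succ a m q.1.1 q.1.2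
    rw [if_neg (fun h' => q.2 (h'.symm.trans h)), if_pos h] at hsucc
    have := minImbalance_le a (Nat.add_one_le_of_lt hm) q.1.1 q.1.2
    simp only [marking]
    omega
  · exact Nat.zero_le _

lemma pairNet_fire_letter {m : ℕ} (hm : m < ∑ t, a t) :
    (pairNet a).fire (marking a m) (letter a m) = marking a (m + 1) := by
  funext q
  have hsucc := imbalance_succ a m q.1.1 q.1.2
  have h0 := minImbalance_le a hm.le q.1.1 q.1.2
  have h1 := minImbalance_le a (Nat.add_one_le_of_lt hm) q.1.1 q.1.2
  simp only [PetriNet.fire, pairNet, marking]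
  split_ifs at hsucc ⊢ with h h' <;> first | exact absurd (h'.symm.trans h) q.2 | omega

/-- The place `(letter a m, t)` blocks `t`: by the balance property its marking stays
below `a (letter a m)`. -/
lemma eq_letter_of_pairNet_enabled (ha : ∀ t, 0 < a t) {m : ℕ} {t : L}
    (h : (pairNet a).enabled (marking a m) t) : t = letter a m := by
  by_contra hne
  have hq := h ⟨(letter a m, t), Ne.symm hne⟩
  obtain ⟨r, hr⟩ := exists_imbalance_eq_minImbalance a (letter a m) t
  have := imbalance_sub_lt a ha m r hne
  have := ha (letter a m)
  simp only [pairNet, marking, if_true] at hq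
  omega

lemma imbalance_eq_of_marking_eq {m m' : ℕ} (hm : m ≤ ∑ t, a t) (hm' : m' ≤ ∑ t, a t)
    (heq : marking a m = marking a m') (i l : L) : imbalance a m i l = imbalance a m' i l := by
  by_cases hil : i = l
  · simp [imbalance, hil]
  have hq := congrFun heq ⟨(i, l), hil⟩
  have := minImbalance_le a hm i l
  have := minImbalance_le a hm' i l
  simp only [marking] at hq
  omega

lemma eq_of_imbalance_eq (hprime : primeVec a) {m m' : ℕ} (hm : m < ∑ t, a t) (hle : m' ≤ m)
    (heq : ∀ i l, imbalance a m i l = imbalance a m' i l) : m = m' := by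
  have hdvd : ∀ i ∈ Finset.univ, (∑ t, a t) ∣ a i * (m - m') := by
    intro i _
    have h := sum_imbalance a m i
    rw [Finset.sum_congr rfl fun l _ => heq i l, sum_imbalance] at h
    refine Int.natCast_dvd_natCast.1 ⟨count a m i - count a m' i, ?_⟩
    push_cast [Nat.cast_sub hle] at h ⊢
    linarith
  have := Nat.eq_zero_of_dvd_of_lt (Finset.dvd_of_dvd_mul_of_gcd_eq_one hprime hdvd) (by omega)
  omega

lemma marking_injOn (hprime : primeVec a) : Set.InjOn (marking a) (Set.Iio (∑ t, a t)) := by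
  intro m hm m' hm' heq
  wlog hle : m' ≤ m generalizing m m'
  · exact (this hm' hm heq.symm (le_of_not_ge hle)).symm
  exact eq_of_imbalance_eq a hprime hm hle
    (imbalance_eq_of_marking_eq a (le_of_lt hm) (le_of_lt hm') heq)

lemma isFiringCycle_pairNet (ha : ∀ t, 0 < a t) (hprime : primeVec a) :
    (pairNet a).IsFiringCycle (word a) (marking a) where
  period := by rw [length_word, marking_sum a ha]
  enabled m hm := by
    rw [getElem_word]
    exact pairNet_enabled_letter a (length_word a ▸ hm)
  fire m hm := by rw [getElem_word, pairNet_fire_letter a (length_word a ▸ hm)]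
  eq_of_enabled m hm t ht := by
    rw [getElem_word]
    exact eq_letter_of_pairNet_enabled a ha ht
  injOn := length_word a ▸ marking_injOn a hprime

lemma length_word_pos (ha : ∀ t, 0 < a t) : 0 < (word a).length := by
  obtain ⟨t⟩ := ‹Nonempty L›
  rw [length_word]
  exact (ha t).trans_le (Finset.single_le_sum (fun _ _ => Nat.zero_le _) (Finset.mem_univ t))

theorem cyclicWMGSolvable_word (ha : ∀ t, 0 < a t) (hprime : primeVec a) :
    cyclicWMGSolvable (word a) :=
  let e := (Fintype.equivFin {q : L × L // q.1 ≠ q.2}).symm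
  ⟨length_word_pos a ha, _, restrictNet (pairNet a) e, marking a 0 ∘ e, (pairNet_wmg a).restrictNet,
    ((isFiringCycle_pairNet a ha hprime).restrictNet e.surjective).solves _⟩

end PairNet

end

end Balanced

/-- weak synthesis of a WMG with circular reachability graph from a
prime T-vector with full support. -/
theorem stmt18 {L : Type} [Fintype L] [DecidableEq L] [Nonempty L]
    (Υ : L → ℕ) (hpos : ∀ t, 1 ≤ Υ t) (hprime : primeVec Υ) :
    ∃ w : List L, (∀ t, parikh w t = Υ t) ∧ cyclicWMGSolvable w :=
  ⟨Balanced.word Υ, Balanced.count_word Υ hpos, Balanced.cyclicWMGSolvable_word Υ hpos hprime⟩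
end

section
/- The words w2 = abcabdabd and w3 = abcbadabd over the alphabet {a,b,c,d} have equal Parikh vectors (a↦3, b↦3, c↦1, d↦2); the word w2 is cyclically solvable by a weighted marked graph, whereas w3 is not cyclically solvable by a weighted marked graph. Consequently, cyclic WMG-solvability of a word is not determined by its Parikh vector. -/
section Aux19

/-- Input weight matrix of the solving net: rows are places, columns the letters a,b,c,d. -/
def preN : Fin 5 → Fin 4 → ℕ :=
  ![![0,1,0,0], ![0,0,3,0], ![0,0,0,3], ![1,0,0,0], ![2,0,0,0]]

/-- Output weight matrix: rows the letters a,b,c,d, columns the places. -/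
def postN : Fin 4 → Fin 5 → ℕ :=
  ![![1,0,0,0,0], ![0,1,2,0,0], ![0,0,0,3,0], ![0,0,0,0,3]]

/-- The nine reachable markings of the solving system. -/
def mk19 : Fin 9 → Fin 5 → ℕ :=
  ![![0,2,0,1,4], ![1,2,0,0,2], ![0,3,2,0,2], ![0,0,2,3,2], ![1,0,2,2,0],
    ![0,1,4,2,0], ![0,1,1,2,3], ![1,1,1,1,1], ![0,2,3,1,1]]

/-- The word `abcabdabd` as a function into letter indices. -/
def wfIdx : Fin 9 → Fin 4 := ![0,1,2,0,1,3,0,1,3]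

variable {L : Type} [DecidableEq L]

/-- The four letters. -/
def ltr (a b c d : L) : Fin 4 → L := ![a,b,c,d]

/-- The WMG solving `abcabdabd`: places p0:a→b, p1:b→c, p2:b→d, p3:c→a, p4:d→a. -/
def net19 (a b c d : L) : PetriNet (Fin 5) L where
  pre := fun p t =>
    if t = a then preN p 0
    else if t = b then preN p 1
    else if t = c then preN p 2
    else if t = d then preN p 3 else 0
  post := fun t p =>
    if t = a then postN 0 p
    else if t = b then postN 1 p
    else if t = c then postN 2 p
    else if t = d then postN 3 p else 0

variable {a b c d : L}

lemma hall19 [Fintype L] (hab : a ≠ b) (hac : a ≠ c) (had : a ≠ d)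
    (hbc : b ≠ c) (hbd : b ≠ d) (hcd : c ≠ d) (hcard : Fintype.card L = 4) :
    ∀ t : L, ∃ j : Fin 4, t = ltr a b c d j := by
  intro t
  have h4 : ({a, b, c, d} : Finset L).card = 4 := by
    rw [Finset.card_insert_of_notMem (by simp [hab, hac, had]),
        Finset.card_insert_of_notMem (by simp [hbc, hbd]),
        Finset.card_insert_of_notMem (by simp [hcd]), Finset.card_singleton]
  have huniv : ({a, b, c, d} : Finset L) = Finset.univ :=
    Finset.eq_univ_of_card _ (by rw [h4, hcard])
  have ht : t ∈ ({a, b, c, d} : Finset L) := huniv ▸ Finset.mem_univ t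
  simp only [Finset.mem_insert, Finset.mem_singleton] at ht
  rcases ht with rfl | rfl | rfl | rfl
  exacts [⟨0, rfl⟩, ⟨1, rfl⟩, ⟨2, rfl⟩, ⟨3, rfl⟩]

lemma pre_ltr19 (hab : a ≠ b) (hac : a ≠ c) (had : a ≠ d)
    (hbc : b ≠ c) (hbd : b ≠ d) (hcd : c ≠ d) (p : Fin 5) (j : Fin 4) :
    (net19 a b c d).pre p (ltr a b c d j) = preN p j := by
  fin_cases j <;>
    simp [net19, ltr, hab, hac, had, hbc, hbd, hcd,
      hab.symm, hac.symm, had.symm, hbc.symm, hbd.symm, hcd.symm]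

lemma post_ltr19 (hab : a ≠ b) (hac : a ≠ c) (had : a ≠ d)
    (hbc : b ≠ c) (hbd : b ≠ d) (hcd : c ≠ d) (j : Fin 4) (p : Fin 5) :
    (net19 a b c d).post (ltr a b c d j) p = postN j p := by
  fin_cases j <;>
    simp [net19, ltr, hab, hac, had, hbc, hbd, hcd,
      hab.symm, hac.symm, had.symm, hbc.symm, hbd.symm, hcd.symm]

/-- The word `abcabdabd` as a function. -/
def wf19 (a b c d : L) : Fin 9 → L := fun i => ltr a b c d (wfIdx i)

lemma wget19 (i : Fin 9) : [a, b, c, a, b, d, a, b, d].get i = wf19 a b c d i := by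
  fin_cases i <;> rfl

lemma inj19 : Function.Injective mk19 := by decide

lemma net19_wmg [Fintype L] (hab : a ≠ b) (hac : a ≠ c) (had : a ≠ d)
    (hbc : b ≠ c) (hbd : b ≠ d) (hcd : c ≠ d) (hcard : Fintype.card L = 4) :
    (net19 a b c d).wmg := by
  have hall := hall19 hab hac had hbc hbd hcd hcard
  constructor
  · intro p t t' h1 h2
    obtain ⟨j, rfl⟩ := hall t
    obtain ⟨j', rfl⟩ := hall t'
    rw [pre_ltr19 hab hac had hbc hbd hcd] at h1 h2
    have : j = j' := (by decide : ∀ p j j', 0 < preN p j → 0 < preN p j' → j = j') p j j' h1 h2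
    rw [this]
  · intro p t t' h1 h2
    obtain ⟨j, rfl⟩ := hall t
    obtain ⟨j', rfl⟩ := hall t'
    rw [post_ltr19 hab hac had hbc hbd hcd] at h1 h2
    have : j = j' := (by decide : ∀ p j j', 0 < postN j p → 0 < postN j' p → j = j') p j j' h1 h2
    rw [this]

lemma step19 (hab : a ≠ b) (hac : a ≠ c) (had : a ≠ d)
    (hbc : b ≠ c) (hbd : b ≠ d) (hcd : c ≠ d) (i : Fin 9) :
    (net19 a b c d).step (mk19 i) (wf19 a b c d i) (mk19 (i + 1)) := by
  constructor
  · intro p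
    rw [show wf19 a b c d i = ltr a b c d (wfIdx i) from rfl,
      pre_ltr19 hab hac had hbc hbd hcd]
    exact (by decide : ∀ i p, preN p (wfIdx i) ≤ mk19 i p) i p
  · funext p
    show mk19 (i + 1) p =
      mk19 i p - (net19 a b c d).pre p (wf19 a b c d i) + (net19 a b c d).post (wf19 a b c d i) p
    rw [show wf19 a b c d i = ltr a b c d (wfIdx i) from rfl,
      pre_ltr19 hab hac had hbc hbd hcd, post_ltr19 hab hac had hbc hbd hcd]
    exact (by decide : ∀ i p, mk19 (i + 1) p = mk19 i p - preN p (wfIdx i) + postN (wfIdx i) p) i p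

lemma det19 [Fintype L] (hab : a ≠ b) (hac : a ≠ c) (had : a ≠ d)
    (hbc : b ≠ c) (hbd : b ≠ d) (hcd : c ≠ d) (hcard : Fintype.card L = 4)
    (i : Fin 9) (t : L) (h : (net19 a b c d).enabled (mk19 i) t) :
    t = wf19 a b c d i := by
  obtain ⟨j, rfl⟩ := hall19 hab hac had hbc hbd hcd hcard t
  have h' : ∀ p, preN p j ≤ mk19 i p := fun p => by
    rw [← pre_ltr19 hab hac had hbc hbd hcd]; exact h p
  have hj : j = wfIdx i :=
    (by decide : ∀ i j, (∀ p, preN p j ≤ mk19 i p) → j = wfIdx i) i j h'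
  rw [hj]; rfl

lemma solv19 [Fintype L] (hab : a ≠ b) (hac : a ≠ c) (had : a ≠ d)
    (hbc : b ≠ c) (hbd : b ≠ d) (hcd : c ≠ d) (hcard : Fintype.card L = 4) :
    cyclicWMGSolvable [a, b, c, a, b, d, a, b, d] := by
  have hw : 0 < ([a, b, c, a, b, d, a, b, d] : List L).length := by simp
  refine ⟨hw, 5, net19 a b c d, mk19 0, net19_wmg hab hac had hbc hbd hcd hcard, ?_⟩
  -- single-step reachability between consecutive markings
  have key : ∀ i j : Fin 9, j = i + 1 →
      ∃ t, (net19 a b c d).step (mk19 i) t (mk19 j) := by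
    rintro i j rfl
    exact ⟨_, step19 hab hac had hbc hbd hcd i⟩
  have r0 : (net19 a b c d).Reach (mk19 0) (mk19 0) := Relation.ReflTransGen.refl
  have r1 := r0.tail (key 0 1 (by decide))
  have r2 := r1.tail (key 1 2 (by decide))
  have r3 := r2.tail (key 2 3 (by decide))
  have r4 := r3.tail (key 3 4 (by decide))
  have r5 := r4.tail (key 4 5 (by decide))
  have r6 := r5.tail (key 5 6 (by decide))
  have r7 := r6.tail (key 6 7 (by decide))
  have r8 := r7.tail (key 7 8 (by decide))
  have reach : ∀ i : Fin 9, (net19 a b c d).Reach (mk19 0) (mk19 i) := by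
    intro i
    fin_cases i
    exacts [r0, r1, r2, r3, r4, r5, r6, r7, r8]
  have char : ∀ M, (net19 a b c d).Reach (mk19 0) M → ∃ i : Fin 9, M = mk19 i := by
    intro M h
    induction h with
    | refl => exact ⟨0, rfl⟩
    | tail _ hstep ih =>
      obtain ⟨i, rfl⟩ := ih
      obtain ⟨t, hen, rfl⟩ := hstep
      have ht := det19 hab hac had hbc hbd hcd hcard i t hen
      subst ht
      exact ⟨i + 1, ((step19 hab hac had hbc hbd hcd i).2).symm⟩
  set g : Fin 9 → {M // (net19 a b c d).Reach (mk19 0) M} := fun i => ⟨mk19 i, reach i⟩ with hg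
  have hginj : Function.Injective g := fun i j hij =>
    inj19 (congrArg Subtype.val hij)
  have hgsurj : Function.Surjective g := by
    rintro ⟨M, hM⟩
    obtain ⟨i, rfl⟩ := char M hM
    exact ⟨i, rfl⟩
  let E := Equiv.ofBijective g ⟨hginj, hgsurj⟩
  have hE : ∀ i, E i = g i := fun _ => rfl
  refine ⟨E.symm, ?_, ?_⟩
  · have h0 : ((net19 a b c d).RG (mk19 0)).init = g 0 := Subtype.ext rfl
    rw [h0, ← hE 0]
    refine (E.symm_apply_apply 0).trans ?_
    rfl
  · intro s t s'
    obtain ⟨i, rfl⟩ := hgsurj s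
    obtain ⟨j, rfl⟩ := hgsurj s'
    have hsi : E.symm (g i) = i := by rw [← hE i]; exact E.symm_apply_apply i
    have hsj : E.symm (g j) = j := by rw [← hE j]; exact E.symm_apply_apply j
    show (net19 a b c d).step (mk19 i) t (mk19 j) ↔
      (t = [a, b, c, a, b, d, a, b, d].get (E.symm (g i)) ∧
        (E.symm (g j)).val = ((E.symm (g i)).val + 1) % 9)
    rw [hsi, hsj]
    constructor
    · rintro ⟨hen, hfire⟩
      have ht := det19 hab hac had hbc hbd hcd hcard i t hen
      subst ht
      have hj : j = i + 1 := inj19 (hfire.trans ((step19 hab hac had hbc hbd hcd i).2).symm)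
      subst hj
      exact ⟨(wget19 i).symm, by simp [Fin.val_add]⟩
    · rintro ⟨rfl, hj⟩
      have hj' : j = i + 1 := Fin.ext (by rw [hj]; simp [Fin.val_add])
      subst hj'
      rw [wget19 i]
      exact step19 hab hac had hbc hbd hcd i

lemma unsolv19 (hab : a ≠ b) (hac : a ≠ c) (had : a ≠ d)
    (hbc : b ≠ c) (hbd : b ≠ d) :
    ¬ cyclicWMGSolvable [a, b, c, b, a, d, a, b, d] := by
  rintro ⟨hw, k, N, M0, ⟨hcf, hun⟩, ζ, hinit, htr⟩
  -- the markings along the circle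
  set Mk : Fin 9 → Fin k → ℕ := fun i => (ζ.symm i).1 with hMk
  have hstep : ∀ i : Fin 9,
      N.step (Mk i) ([a, b, c, b, a, d, a, b, d].get i) (Mk (i + 1)) := by
    intro i
    have h1 : ζ (ζ.symm i) = i := ζ.apply_symm_apply i
    have h2 : ζ (ζ.symm ((i + 1 : Fin 9))) = (i + 1 : Fin 9) := ζ.apply_symm_apply _
    refine (htr (ζ.symm i) _ (ζ.symm ((i + 1 : Fin 9)))).2 ?_
    show [a, b, c, b, a, d, a, b, d].get i = [a, b, c, b, a, d, a, b, d].get (ζ (ζ.symm i)) ∧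
      (ζ (ζ.symm ((i + 1 : Fin 9)))).val = ((ζ (ζ.symm i)).val + 1) % 9
    constructor
    · exact congrArg _ h1.symm
    · calc (ζ (ζ.symm ((i + 1 : Fin 9)))).val = ((i + 1 : Fin 9)).val := congrArg Fin.val h2
        _ = (i.val + 1) % 9 := by simp [Fin.val_add]
        _ = ((ζ (ζ.symm i)).val + 1) % 9 := by rw [congrArg Fin.val h1]
  have hdet : ∀ (i : Fin 9) (t : L), N.enabled (Mk i) t →
      t = [a, b, c, b, a, d, a, b, d].get i := by
    intro i t hen
    have hr : N.Reach M0 (N.fire (Mk i) t) := (ζ.symm i).2.tail ⟨t, hen, rfl⟩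
    have h2 : (N.RG M0).tr (ζ.symm i) t ⟨_, hr⟩ := ⟨hen, rfl⟩
    rw [htr] at h2
    have h3 := h2.1
    rwa [Equiv.apply_symm_apply] at h3
  -- `a` is not enabled at state 3
  have hna : ¬ N.enabled (Mk 3) a := fun h => hab (hdet 3 a h)
  obtain ⟨p, hp⟩ : ∃ p, Mk 3 p < N.pre p a := by
    by_contra hc
    push_neg at hc
    exact hna fun q => hc q
  have hpos : 0 < N.pre p a := lt_of_le_of_lt (Nat.zero_le _) hp
  have pz : ∀ t : L, t ≠ a → N.pre p t = 0 := by
    intro t ht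
    by_contra h
    exact ht (hcf p t a (Nat.pos_of_ne_zero h) hpos)
  -- step equations at place p
  have E : ∀ (i : Fin 9) (t : L) (j : Fin 9), t = [a, b, c, b, a, d, a, b, d].get i →
      j = i + 1 → N.pre p t ≤ Mk i p ∧ Mk j p = Mk i p - N.pre p t + N.post t p := by
    rintro i t j rfl rfl
    exact ⟨(hstep i).1 p, by rw [(hstep i).2]; rfl⟩
  obtain ⟨en0, q0⟩ := E 0 a 1 rfl (by decide)
  obtain ⟨-, q1⟩ := E 1 b 2 rfl (by decide)
  obtain ⟨-, q2⟩ := E 2 c 3 rfl (by decide)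
  obtain ⟨-, q3⟩ := E 3 b 4 rfl (by decide)
  obtain ⟨en4, q4⟩ := E 4 a 5 rfl (by decide)
  obtain ⟨-, q5⟩ := E 5 d 6 rfl (by decide)
  obtain ⟨en6, q6⟩ := E 6 a 7 rfl (by decide)
  obtain ⟨-, q7⟩ := E 7 b 8 rfl (by decide)
  obtain ⟨-, q8⟩ := E 8 d 0 rfl (by decide)
  rw [pz b (Ne.symm hab)] at q1 q3 q7
  -- the input of p must be b, with positive weight
  have hgpos : 0 < N.post b p := by omega
  have poz : ∀ t : L, t ≠ b → N.post t p = 0 := by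
    intro t ht
    by_contra h
    exact ht (hun p t b (Nat.pos_of_ne_zero h) hgpos)
  rw [poz a hab] at q0 q4 q6
  rw [pz c (Ne.symm hac), poz c (Ne.symm hbc)] at q2
  rw [pz d (Ne.symm had), poz d (Ne.symm hbd)] at q5 q8
  omega

end Aux19

/-- `abcabdabd` and `abcbadabd` are Parikh-equivalent, the former is
cyclically WMG-solvable, the latter is not. -/
theorem stmt19 {L : Type} [Fintype L] [DecidableEq L] (a b c d : L)
    (hdist : [a, b, c, d].Pairwise (· ≠ ·)) (hcard : Fintype.card L = 4) :
    (∀ t : L, parikh [a, b, c, a, b, d, a, b, d] t = parikh [a, b, c, b, a, d, a, b, d] t) ∧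
    parikh [a, b, c, a, b, d, a, b, d] a = 3 ∧
    parikh [a, b, c, a, b, d, a, b, d] b = 3 ∧
    parikh [a, b, c, a, b, d, a, b, d] c = 1 ∧
    parikh [a, b, c, a, b, d, a, b, d] d = 2 ∧
    cyclicWMGSolvable [a, b, c, a, b, d, a, b, d] ∧
    ¬ cyclicWMGSolvable [a, b, c, b, a, d, a, b, d] := by
  simp only [List.pairwise_cons, List.mem_cons, List.not_mem_nil, List.mem_singleton,
    forall_eq_or_imp, forall_eq, List.Pairwise.nil, and_true, IsEmpty.forall_iff] at hdist
  obtain ⟨⟨hab, hac, had, -⟩, ⟨hbc, hbd, -⟩, hcdX⟩ := hdist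
  have hcd : c ≠ d := hcdX.1.1
  have hperm : ([a, b, c, a, b, d, a, b, d] : List L).Perm [a, b, c, b, a, d, a, b, d] :=
    List.Perm.cons a (List.Perm.cons b (List.Perm.cons c (List.Perm.swap b a [d, a, b, d])))
  refine ⟨fun t => hperm.count_eq t, ?_, ?_, ?_, ?_,
    solv19 hab hac had hbc hbd hcd hcard, unsolv19 hab hac had hbc hbd⟩ <;>
    simp [parikh, List.count_cons, hab, hac, had, hbc, hbd, hcd,
      hab.symm, hac.symm, had.symm, hbc.symm, hbd.symm, hcd.symm]
end
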